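/- arXiv:1309.2111 — 3 statements merged into one kernel-verified Lean document; each statement's English description precedes it below -/
import Mathlib

section
/- Let ξ₁, ξ₂ be independent standard complex Gaussian random variables, and let Z₁ = αξ₁ and Z₂ = βξ₁ + γξ₂ with α, β, γ nonzero complex numbers. Then for 1 < p < 2, E[|Z₁Z₂|^{-p}] ≤ |αγ|^{-p} · Γ(1 - p/2)². -/
open MeasureTheory Real
open scoped Real ENNReal

private lemma LA' {a b : ℝ} (ha : 0 < a) (hb : 0 < b) :
    ∫⁻ t in Set.Ioi (0:ℝ), ENNReal.ofReal (t ^ (a-1) * Real.exp (-(b * t)))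
      = ENNReal.ofReal ((1/b) ^ a * Real.Gamma a) := by
  rw [← Real.integral_rpow_mul_exp_neg_mul_Ioi ha hb,
    ofReal_integral_eq_lintegral_ofReal]
  · have := integrableOn_rpow_mul_exp_neg_mul_rpow (s := a - 1) (p := 1)
      (by linarith) one_pos hb
    simpa [Real.rpow_one, neg_mul] using this.integrable
  · filter_upwards [self_mem_ae_restrict measurableSet_Ioi] with t ht
    exact mul_nonneg (Real.rpow_nonneg (le_of_lt ht) _) (Real.exp_pos _).le

private lemma Lexp' {r : ℝ} (hr : 0 < r) :
    ∫⁻ u in Set.Ioi (0:ℝ), ENNReal.ofReal (Real.exp (-(r * u)))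
      = ENNReal.ofReal (1/r) := by
  have := LA' (a := 1) (b := r) one_pos hr
  simpa [Real.rpow_one, Real.Gamma_one] using this

private lemma LC' {q b : ℝ} (hq0 : 0 < q) (hq1 : q < 1) (hb : 0 < b) :
    ∫⁻ t in Set.Ioi (0:ℝ), ENNReal.ofReal (t ^ (q-1) / (1 + b * t))
      = ENNReal.ofReal ((1/b) ^ q * (Real.Gamma q * Real.Gamma (1-q))) := by
  have meas : Measurable (fun x : ℝ × ℝ =>
      ENNReal.ofReal (x.1 ^ (q-1) * (Real.exp (-x.2) * Real.exp (-(b * x.1 * x.2))))) := by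
    fun_prop
  calc ∫⁻ t in Set.Ioi (0:ℝ), ENNReal.ofReal (t ^ (q-1) / (1 + b * t))
      = ∫⁻ t in Set.Ioi (0:ℝ), ∫⁻ u in Set.Ioi (0:ℝ),
          ENNReal.ofReal (t ^ (q-1) * (Real.exp (-u) * Real.exp (-(b * t * u)))) := by
        refine setLIntegral_congr_fun measurableSet_Ioi ?_
        intro t ht
        have ht' : (0:ℝ) < t := ht
        have h1bt : 0 < 1 + b * t := by positivity
        have heq : ∀ u : ℝ, t ^ (q-1) * (Real.exp (-u) * Real.exp (-(b * t * u)))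
            = t ^ (q-1) * Real.exp (-((1 + b*t) * u)) := by
          intro u
          rw [← Real.exp_add]
          ring_nf
        simp_rw [heq, ENNReal.ofReal_mul (Real.rpow_nonneg ht'.le _)]
        rw [lintegral_const_mul' _ _ ENNReal.ofReal_ne_top, Lexp' h1bt,
          ← ENNReal.ofReal_mul (Real.rpow_nonneg ht'.le _), div_eq_mul_one_div]
    _ = ∫⁻ u in Set.Ioi (0:ℝ), ∫⁻ t in Set.Ioi (0:ℝ),
          ENNReal.ofReal (t ^ (q-1) * (Real.exp (-u) * Real.exp (-(b * t * u)))) := by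
        exact lintegral_lintegral_swap meas.aemeasurable
    _ = ∫⁻ u in Set.Ioi (0:ℝ), ENNReal.ofReal (Real.exp (-u)) *
          ENNReal.ofReal ((1/(b*u)) ^ q * Real.Gamma q) := by
        refine setLIntegral_congr_fun measurableSet_Ioi ?_
        intro u hu
        have hu' : (0:ℝ) < u := hu
        have heq : ∀ t : ℝ, t ^ (q-1) * (Real.exp (-u) * Real.exp (-(b * t * u)))
            = Real.exp (-u) * (t ^ (q-1) * Real.exp (-((b*u) * t))) := by
          intro t; ring_nf
        simp_rw [heq, ENNReal.ofReal_mul (Real.exp_pos _).le]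
        rw [lintegral_const_mul' _ _ ENNReal.ofReal_ne_top, LA' hq0 (by positivity)]
    _ = ENNReal.ofReal ((1/b) ^ q * Real.Gamma q) * ∫⁻ u in Set.Ioi (0:ℝ),
          ENNReal.ofReal (u ^ ((1-q)-1) * Real.exp (-(1 * u))) := by
        rw [← lintegral_const_mul' _ _ ENNReal.ofReal_ne_top]
        refine setLIntegral_congr_fun measurableSet_Ioi ?_
        intro u hu
        have hu' : (0:ℝ) < u := hu
        beta_reduce
        rw [← ENNReal.ofReal_mul (by positivity), ← ENNReal.ofReal_mul (by positivity)]
        congr 1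
        rw [one_div (b*u), mul_inv, Real.mul_rpow (by positivity) (by positivity),
          Real.inv_rpow hu'.le, ← Real.rpow_neg hu'.le]
        rw [one_mul]
        have h2 : -q = 1 - q - 1 := by ring
        rw [← one_div, h2]
        ring
    _ = ENNReal.ofReal ((1/b) ^ q * (Real.Gamma q * Real.Gamma (1-q))) := by
        rw [LA' (by linarith) one_pos]
        rw [← ENNReal.ofReal_mul (by positivity)]
        congr 1
        simp only [one_div, inv_one, Real.one_rpow, one_mul]
        ring

private lemma gauss1d' {a : ℝ} (ha : 0 < a) :
    ∫⁻ x : ℝ, ENNReal.ofReal (Real.exp (-(a * x^2))) = ENNReal.ofReal (Real.sqrt (π / a)) := by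
  rw [← integral_gaussian a, ofReal_integral_eq_lintegral_ofReal]
  · simp_rw [neg_mul]
  · simpa [neg_mul] using integrable_exp_neg_mul_sq ha
  · exact Filter.Eventually.of_forall fun x => (Real.exp_pos _).le

private lemma gaussC' {a : ℝ} (ha : 0 < a) :
    ∫⁻ w : ℂ, ENNReal.ofReal (Real.exp (-(a * ‖w‖^2))) = ENNReal.ofReal (π / a) := by
  have hmp := Complex.volume_preserving_equiv_real_prod.symm
  rw [← hmp.lintegral_comp (by fun_prop)]
  have hnv : ∀ p : ℝ × ℝ, ‖Complex.measurableEquivRealProd.symm p‖^2 = p.1^2 + p.2^2 := by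
    intro p
    rw [Complex.measurableEquivRealProd_symm_apply, Complex.sq_norm,
      Complex.normSq_apply]
    ring
  simp_rw [hnv]
  have heq : ∀ p : ℝ × ℝ, ENNReal.ofReal (Real.exp (-(a * (p.1^2 + p.2^2))))
      = ENNReal.ofReal (Real.exp (-(a * p.1^2))) * ENNReal.ofReal (Real.exp (-(a * p.2^2))) := by
    intro p
    rw [← ENNReal.ofReal_mul (Real.exp_pos _).le, ← Real.exp_add]
    ring_nf
  simp_rw [heq]
  have hprod := lintegral_prod_mul (μ := volume) (ν := volume)
    (f := fun x : ℝ => ENNReal.ofReal (Real.exp (-(a * x^2))))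
    (g := fun y : ℝ => ENNReal.ofReal (Real.exp (-(a * y^2))))
    (by fun_prop) (by fun_prop)
  rw [Measure.volume_eq_prod ℝ ℝ, hprod, gauss1d' ha,
    ← ENNReal.ofReal_mul (Real.sqrt_nonneg _), Real.mul_self_sqrt (by positivity)]

private lemma gaussC_shift' {a : ℝ} (ha : 0 < a) (d : ℂ) :
    ∫⁻ w : ℂ, ENNReal.ofReal (Real.exp (-(a * ‖w + d‖^2))) = ENNReal.ofReal (π / a) := by
  rw [lintegral_add_right_eq_self (fun w => ENNReal.ofReal (Real.exp (-(a * ‖w‖^2)))) d]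
  exact gaussC' ha

private lemma SQ' {s : ℝ} (hs : 0 ≤ s) (c w : ℂ) :
    (1+s) * ‖w + (s/(1+s) : ℝ) • c‖^2 ≤ s * ‖c + w‖^2 + ‖w‖^2 := by
  have hA : (0:ℝ) < 1 + s := by linarith
  have hnorm : ∀ z : ℂ, ‖z‖^2 = z.re^2 + z.im^2 := by
    intro z
    rw [Complex.sq_norm, Complex.normSq_apply]
    ring
  have h1k : 0 ≤ 1 - s/(1+s) := by
    have : s/(1+s) ≤ 1 := div_le_one_of_le₀ (by linarith) hA.le
    linarith
  have hexp : s * ‖c + w‖^2 + ‖w‖^2 - (1+s) * ‖w + (s/(1+s) : ℝ) • c‖^2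
      = s * (1 - s/(1+s)) * (c.re^2 + c.im^2) := by
    simp only [hnorm, Complex.add_re, Complex.add_im, Complex.real_smul, Complex.mul_re,
      Complex.mul_im, Complex.ofReal_re, Complex.ofReal_im]
    field_simp
    ring
  nlinarith [mul_nonneg (mul_nonneg hs h1k) (add_nonneg (sq_nonneg c.re) (sq_nonneg c.im))]

private lemma rpow_inv_sq {x q p : ℝ} (hx : 0 < x) (hqp : p = 2*q) :
    (1/x^2) ^ q = x ^ (-p) := by
  rw [one_div, ← Real.rpow_natCast x 2, ← Real.rpow_neg hx.le, ← Real.rpow_mul hx.le]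
  congr 1
  push_cast
  linarith

private theorem key' {p : ℝ} (hp1 : 1 < p) (hp2 : p < 2) (c g : ℂ) (hg : g ≠ 0) :
    ∫⁻ w : ℂ, ENNReal.ofReal (‖c + g*w‖ ^ (-p) * Real.exp (-‖w‖^2))
      ≤ ENNReal.ofReal (π * ‖g‖ ^ (-p) * Real.Gamma (1 - p/2)) := by
  set q : ℝ := p/2 with hqdef
  have hq0 : 0 < q := by rw [hqdef]; linarith
  have hq1 : q < 1 := by rw [hqdef]; linarith
  have hΓ : 0 < Real.Gamma q := Real.Gamma_pos_of_pos hq0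
  have hoΓ0 : ENNReal.ofReal (Real.Gamma q) ≠ 0 := (ENNReal.ofReal_pos.2 hΓ).ne'
  have hoΓtop : ENNReal.ofReal (Real.Gamma q) ≠ ⊤ := ENNReal.ofReal_ne_top
  have hginv : ∀ w : ℂ, c + g*w = g * (c/g + w) := by
    intro w; field_simp
  have hgn : (0:ℝ) < ‖g‖ := norm_pos_iff.mpr hg
  set F : ℂ → ℝ → ℝ≥0∞ := fun w t =>
    ENNReal.ofReal (t ^ (q-1) * Real.exp (-(‖c + g*w‖^2 * t)) * Real.exp (-‖w‖^2)) with hF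
  have Fmeas : Measurable (Function.uncurry F) := by
    apply Measurable.ennreal_ofReal
    fun_prop
  have aeeq : ∀ᵐ w : ℂ, ENNReal.ofReal (‖c + g*w‖ ^ (-p) * Real.exp (-‖w‖^2))
      = (ENNReal.ofReal (Real.Gamma q))⁻¹ * ∫⁻ t in Set.Ioi (0:ℝ), F w t := by
    have hnull : volume {w : ℂ | c + g*w = 0} = 0 := by
      have hset : {w : ℂ | c + g*w = 0} = {-(c/g)} := by
        ext w
        simp only [Set.mem_setOf_eq, Set.mem_singleton_iff]
        constructor
        · intro h
          rw [← neg_div, eq_div_iff hg]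
          linear_combination h
        · intro h
          rw [h]
          field_simp
          ring
      rw [hset]
      exact measure_singleton _
    rw [← compl_mem_ae_iff] at hnull
    filter_upwards [hnull] with w hw
    have h0 : c + g*w ≠ 0 := hw
    set x : ℝ := ‖c + g*w‖ with hxdef
    have hx : 0 < x := norm_pos_iff.mpr h0
    have hsplit : ∫⁻ t in Set.Ioi (0:ℝ), F w t
        = (∫⁻ t in Set.Ioi (0:ℝ), ENNReal.ofReal (t ^ (q-1) * Real.exp (-(x^2 * t))))
            * ENNReal.ofReal (Real.exp (-‖w‖^2)) := by
      rw [← lintegral_mul_const' _ _ ENNReal.ofReal_ne_top]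
      refine setLIntegral_congr_fun measurableSet_Ioi ?_
      intro t ht
      have ht' : (0:ℝ) < t := ht
      simp only [hF]
      rw [← ENNReal.ofReal_mul (by positivity)]
    rw [hsplit, LA' hq0 (by positivity),
      rpow_inv_sq (p := p) (q := q) hx (by rw [hqdef]; ring),
      show x ^ (-p) * Real.Gamma q = Real.Gamma q * x ^ (-p) from mul_comm _ _,
      ENNReal.ofReal_mul hΓ.le, ← mul_assoc, ← mul_assoc,
      ENNReal.inv_mul_cancel hoΓ0 hoΓtop, one_mul,
      ← ENNReal.ofReal_mul (Real.rpow_nonneg hx.le _)]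
  calc ∫⁻ w : ℂ, ENNReal.ofReal (‖c + g*w‖ ^ (-p) * Real.exp (-‖w‖^2))
      = ∫⁻ w : ℂ, (ENNReal.ofReal (Real.Gamma q))⁻¹ * ∫⁻ t in Set.Ioi (0:ℝ), F w t :=
        lintegral_congr_ae aeeq
    _ = (ENNReal.ofReal (Real.Gamma q))⁻¹ * ∫⁻ w : ℂ, ∫⁻ t in Set.Ioi (0:ℝ), F w t :=
        lintegral_const_mul' _ _ (ENNReal.inv_ne_top.mpr hoΓ0)
    _ = (ENNReal.ofReal (Real.Gamma q))⁻¹ * ∫⁻ t in Set.Ioi (0:ℝ), ∫⁻ w : ℂ, F w t := by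
        rw [lintegral_lintegral_swap Fmeas.aemeasurable]
    _ ≤ (ENNReal.ofReal (Real.Gamma q))⁻¹ * ∫⁻ t in Set.Ioi (0:ℝ),
          ENNReal.ofReal π * ENNReal.ofReal (t ^ (q-1) / (1 + ‖g‖^2 * t)) := by
        refine mul_le_mul_right ?_ _
        refine setLIntegral_mono_ae (by fun_prop) ?_
        filter_upwards [] with t
        intro ht
        have ht' : (0:ℝ) < t := ht
        set s : ℝ := ‖g‖^2 * t with hsdef
        have hs : 0 < s := by positivity
        have hstep : ∫⁻ w : ℂ, F w t
            ≤ ENNReal.ofReal (t ^ (q-1)) * ENNReal.ofReal (π / (1+s)) := by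
          have hsplit2 : ∀ w : ℂ, F w t = ENNReal.ofReal (t ^ (q-1))
              * ENNReal.ofReal (Real.exp (-(‖c + g*w‖^2 * t)) * Real.exp (-‖w‖^2)) := by
            intro w
            simp only [hF]
            rw [mul_assoc, ENNReal.ofReal_mul (Real.rpow_nonneg ht'.le _)]
          simp_rw [hsplit2]
          rw [lintegral_const_mul' _ _ ENNReal.ofReal_ne_top]
          refine mul_le_mul_right ?_ _
          have hpt : ∀ w : ℂ, Real.exp (-(‖c + g*w‖^2 * t)) * Real.exp (-‖w‖^2)
              ≤ Real.exp (-((1+s) * ‖w + (s/(1+s) : ℝ) • (c/g)‖^2)) := by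
            intro w
            rw [← Real.exp_add, Real.exp_le_exp]
            have hne : ‖c + g*w‖^2 = ‖g‖^2 * ‖c/g + w‖^2 := by
              rw [hginv w, norm_mul, mul_pow]
            have hre : ‖c + g*w‖^2 * t = s * ‖c/g + w‖^2 := by rw [hne, hsdef]; ring
            rw [hre]
            have := SQ' hs.le (c/g) w
            linarith
          calc ∫⁻ w : ℂ, ENNReal.ofReal (Real.exp (-(‖c + g*w‖^2 * t)) * Real.exp (-‖w‖^2))
              ≤ ∫⁻ w : ℂ, ENNReal.ofReal (Real.exp (-((1+s) * ‖w + (s/(1+s) : ℝ) • (c/g)‖^2))) :=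
                lintegral_mono fun w => ENNReal.ofReal_le_ofReal (hpt w)
            _ = ENNReal.ofReal (π / (1+s)) := gaussC_shift' (by linarith) _
        refine hstep.trans (le_of_eq ?_)
        rw [← ENNReal.ofReal_mul (Real.rpow_nonneg ht'.le _),
          ← ENNReal.ofReal_mul Real.pi_pos.le]
        congr 1
        rw [hsdef]
        have h1s : (0:ℝ) < 1 + ‖g‖^2 * t := by positivity
        field_simp
    _ = (ENNReal.ofReal (Real.Gamma q))⁻¹ * (ENNReal.ofReal π
          * ENNReal.ofReal ((1/‖g‖^2) ^ q * (Real.Gamma q * Real.Gamma (1-q)))) := by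
        rw [lintegral_const_mul' _ _ ENNReal.ofReal_ne_top, LC' hq0 hq1 (by positivity)]
    _ = ENNReal.ofReal (π * ‖g‖ ^ (-p) * Real.Gamma (1 - p/2)) := by
        rw [rpow_inv_sq (p := p) (q := q) hgn (by rw [hqdef]; ring)]
        rw [← ENNReal.ofReal_mul Real.pi_pos.le]
        rw [show π * (‖g‖ ^ (-p) * (Real.Gamma q * Real.Gamma (1-q)))
            = Real.Gamma q * (π * ‖g‖ ^ (-p) * Real.Gamma (1-q)) from by ring]
        rw [ENNReal.ofReal_mul hΓ.le, ← mul_assoc, ENNReal.inv_mul_cancel hoΓ0 hoΓtop, one_mul]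

theorem stmt0 (p : ℝ) (hp1 : 1 < p) (hp2 : p < 2)
    (α β γ : ℂ) (hα : α ≠ 0) (hβ : β ≠ 0) (hγ : γ ≠ 0) :
    (1 / π ^ 2) *
        ∫ z : ℂ, ∫ w : ℂ,
          ‖α * z * (β * z + γ * w)‖ ^ (-p) * Real.exp (-‖z‖ ^ 2 - ‖w‖ ^ 2)
      ≤ ‖α * γ‖ ^ (-p) * (Real.Gamma (1 - p / 2)) ^ 2 := by
  set Γ1 : ℝ := Real.Gamma (1 - p/2) with hΓ1def
  have hΓ1 : 0 < Γ1 := Real.Gamma_pos_of_pos (by linarith)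
  set f : ℂ → ℂ → ℝ := fun z w =>
    ‖α * z * (β * z + γ * w)‖ ^ (-p) * Real.exp (-‖z‖ ^ 2 - ‖w‖ ^ 2) with hf
  have hfnn : ∀ z w, 0 ≤ f z w := by
    intro z w
    simp only [hf]
    positivity
  have hmeas : Measurable (fun x : ℂ × ℂ => ENNReal.ofReal (f x.1 x.2)) := by
    simp only [hf]
    fun_prop
  set B1 : ℝ := π * ‖α‖ ^ (-p) * Γ1 with hB1def
  set B2 : ℝ := π * ‖γ‖ ^ (-p) * Γ1 with hB2def
  have hB1 : 0 ≤ B1 := by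
    have := Real.pi_pos
    simp only [hB1def]
    positivity
  have hB2 : 0 ≤ B2 := by
    have := Real.pi_pos
    simp only [hB2def]
    positivity
  -- pointwise splitting
  have hsplit : ∀ z w : ℂ, ENNReal.ofReal (f z w)
      = ENNReal.ofReal (‖α * z‖ ^ (-p) * Real.exp (-‖z‖^2))
        * ENNReal.ofReal (‖β * z + γ * w‖ ^ (-p) * Real.exp (-‖w‖^2)) := by
    intro z w
    have h1 : f z w = (‖α * z‖ ^ (-p) * Real.exp (-‖z‖^2))
        * (‖β * z + γ * w‖ ^ (-p) * Real.exp (-‖w‖^2)) := by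
      simp only [hf]
      rw [norm_mul, Real.mul_rpow (norm_nonneg _) (norm_nonneg _),
        show -‖z‖^2 - ‖w‖^2 = -‖z‖^2 + -‖w‖^2 from by ring, Real.exp_add]
      ring
    rw [h1, ENNReal.ofReal_mul (by positivity)]
  -- the double lintegral bound
  have houter : ∫⁻ z : ℂ, ∫⁻ w : ℂ, ENNReal.ofReal (f z w)
      ≤ ENNReal.ofReal B1 * ENNReal.ofReal B2 := by
    have hinner : ∀ z : ℂ, ∫⁻ w : ℂ, ENNReal.ofReal (f z w)
        ≤ ENNReal.ofReal (‖α * z‖ ^ (-p) * Real.exp (-‖z‖^2)) * ENNReal.ofReal B2 := by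
      intro z
      simp_rw [hsplit z]
      rw [lintegral_const_mul' _ _ ENNReal.ofReal_ne_top]
      exact mul_le_mul_right (key' hp1 hp2 (β * z) γ hγ) _
    calc ∫⁻ z : ℂ, ∫⁻ w : ℂ, ENNReal.ofReal (f z w)
        ≤ ∫⁻ z : ℂ, ENNReal.ofReal (‖α * z‖ ^ (-p) * Real.exp (-‖z‖^2))
            * ENNReal.ofReal B2 := lintegral_mono hinner
      _ = (∫⁻ z : ℂ, ENNReal.ofReal (‖α * z‖ ^ (-p) * Real.exp (-‖z‖^2)))
            * ENNReal.ofReal B2 := lintegral_mul_const' _ _ ENNReal.ofReal_ne_top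
      _ ≤ ENNReal.ofReal B1 * ENNReal.ofReal B2 := by
          refine mul_le_mul_left ?_ _
          have hz := key' hp1 hp2 0 α hα
          simpa only [zero_add] using hz
  -- convert to real integrals
  have hfm : ∀ z : ℂ, Measurable fun w : ℂ => f z w := by
    intro z
    simp only [hf]
    fun_prop
  have hG : ∀ z : ℂ, (∫ w : ℂ, f z w) = (∫⁻ w : ℂ, ENNReal.ofReal (f z w)).toReal := by
    intro z
    rw [integral_eq_lintegral_of_nonneg_ae (Filter.Eventually.of_forall fun w => hfnn z w)
      (hfm z).aestronglyMeasurable]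
  have hGmeas : Measurable (fun z : ℂ => ∫⁻ w : ℂ, ENNReal.ofReal (f z w)) :=
    hmeas.lintegral_prod_right'
  have hIle : ∫ z : ℂ, ∫ w : ℂ, f z w ≤ B1 * B2 := by
    have h1 : ∫ z : ℂ, ∫ w : ℂ, f z w
        = (∫⁻ z : ℂ, ENNReal.ofReal ((∫⁻ w : ℂ, ENNReal.ofReal (f z w)).toReal)).toReal := by
      simp_rw [hG]
      rw [integral_eq_lintegral_of_nonneg_ae
        (Filter.Eventually.of_forall fun z => ENNReal.toReal_nonneg)
        hGmeas.ennreal_toReal.aestronglyMeasurable]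
    have h2 : ∫⁻ z : ℂ, ENNReal.ofReal ((∫⁻ w : ℂ, ENNReal.ofReal (f z w)).toReal)
        ≤ ENNReal.ofReal B1 * ENNReal.ofReal B2 :=
      le_trans (lintegral_mono fun z => ENNReal.ofReal_toReal_le) houter
    rw [h1]
    calc (∫⁻ z : ℂ, ENNReal.ofReal ((∫⁻ w : ℂ, ENNReal.ofReal (f z w)).toReal)).toReal
        ≤ (ENNReal.ofReal B1 * ENNReal.ofReal B2).toReal :=
          ENNReal.toReal_mono (ENNReal.mul_ne_top ENNReal.ofReal_ne_top ENNReal.ofReal_ne_top) h2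
      _ = B1 * B2 := by
          rw [ENNReal.toReal_mul, ENNReal.toReal_ofReal hB1, ENNReal.toReal_ofReal hB2]
  have hpi := Real.pi_pos
  have hfinal : (1/π^2) * (B1 * B2) = ‖α * γ‖ ^ (-p) * Γ1 ^ 2 := by
    simp only [hB1def, hB2def]
    rw [norm_mul, Real.mul_rpow (norm_nonneg _) (norm_nonneg _)]
    field_simp
  show (1 / π ^ 2) * ∫ z : ℂ, ∫ w : ℂ, f z w ≤ ‖α * γ‖ ^ (-p) * Γ1 ^ 2
  calc (1 / π ^ 2) * ∫ z : ℂ, ∫ w : ℂ, f z w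
      ≤ (1 / π ^ 2) * (B1 * B2) := by
        apply mul_le_mul_of_nonneg_left hIle (by positivity)
    _ = ‖α * γ‖ ^ (-p) * Γ1 ^ 2 := hfinal
end

section
/- Let μ be a nonzero finite positive measure on ℝ. Then the limit lim_{ε→0+} (1/(2ε)) ∫_ℝ μ((τ−ε, τ+ε)) dμ(τ) exists in [0,∞] and equals ∫_ℝ |F[μ](x)|² dx, where F[μ](x) = ∫ e^{−2πixλ} dμ(λ). -/
open MeasureTheory Real Filter FourierTransform Complex
open scoped Real ENNReal Topology


noncomputable def tri (c t : ℝ) : ℝ := max (c - |t|) 0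

noncomputable def fej (c x : ℝ) : ℝ := (Real.sin (π * c * x))^2 / (π * x)^2

lemma tri_nonneg (c t : ℝ) : 0 ≤ tri c t := le_max_right _ _

lemma tri_le (c t : ℝ) : tri c t ≤ max c 0 := max_le_max (by simp [abs_nonneg, sub_le_self_iff]) le_rfl

lemma tri_continuous (c : ℝ) : Continuous (tri c) := by
  unfold tri; fun_prop

lemma tri_eq_zero {c t : ℝ} (h : c ≤ |t|) : tri c t = 0 := by
  simp [tri, sub_nonpos.2 h]

lemma fej_nonneg (c x : ℝ) : 0 ≤ fej c x := div_nonneg (sq_nonneg _) (sq_nonneg _)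

lemma hd_exp (k : ℂ) (t : ℝ) : HasDerivAt (fun s : ℝ => Complex.exp (k * s)) (k * Complex.exp (k * t)) t := by
  have h1 : HasDerivAt (fun z : ℂ => Complex.exp (k * z)) (k * Complex.exp (k * t)) (t : ℂ) := by
    exact ((Complex.hasDerivAt_exp (k * t)).comp (t:ℂ) ((hasDerivAt_id (t:ℂ)).const_mul k)).congr_deriv (by ring)
  simpa using h1.comp_ofReal

lemma fourier_tri {c x : ℝ} (hc : 0 < c) (hx : x ≠ 0) :
    𝓕 (fun t => (tri c t : ℂ)) x = (fej c x : ℂ) := by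
  obtain ⟨k, hk⟩ : ∃ k : ℂ, k = (-(2 * π * x) : ℝ) * Complex.I := ⟨_, rfl⟩
  have hkne : k ≠ 0 := by
    rw [hk]
    apply mul_ne_zero _ Complex.I_ne_zero
    exact_mod_cast neg_ne_zero.2 (mul_ne_zero (mul_ne_zero two_ne_zero pi_ne_zero) hx)
  obtain ⟨g, hg⟩ : ∃ g : ℝ → ℂ, g = fun (t : ℝ) => Complex.exp (k * (t:ℂ)) * (tri c t : ℂ) := ⟨_, rfl⟩
  have hgc : Continuous g := by
    rw [hg]
    exact (Complex.continuous_exp.comp (by fun_prop)).mul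
      (Complex.continuous_ofReal.comp (tri_continuous c))
  have h0 : 𝓕 (fun t => (tri c t : ℂ)) x = ∫ t, g t := by
    rw [Real.fourier_real_eq_integral_exp_smul]
    congr 1; ext t
    rw [hg, smul_eq_mul, hk]
    congr 2
    push_cast; ring
  have hsupp : ∀ t ∉ Set.Ioc (-c) c, g t = 0 := by
    intro t ht
    have : c ≤ |t| := by
      simp only [Set.mem_Ioc, not_and_or, not_lt, not_le] at ht
      rcases ht with h | h
      · rw [abs_of_nonpos (by linarith)]; linarith
      · rw [abs_of_pos (by linarith)]; linarith
    rw [hg]; simp [tri_eq_zero this]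
  have h1 : ∫ t, g t = ∫ t in (-c)..c, g t := by
    rw [intervalIntegral.integral_of_le (by linarith),
      ← setIntegral_eq_integral_of_forall_compl_eq_zero hsupp]
  have h2 : ∫ t in (-c)..c, g t = (∫ t in (-c)..(0:ℝ), ((c+t : ℝ):ℂ) * Complex.exp (k*t))
      + ∫ t in (0:ℝ)..c, ((c-t : ℝ):ℂ) * Complex.exp (k*t) := by
    rw [← intervalIntegral.integral_add_adjacent_intervals (a := -c) (b := 0) (c := c)
      (hgc.intervalIntegrable _ _) (hgc.intervalIntegrable _ _)]
    congr 1
    · apply intervalIntegral.integral_congr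
      intro t ht
      rw [Set.uIcc_of_le (by linarith)] at ht
      have h1 : |t| = -t := abs_of_nonpos ht.2
      rw [hg]
      simp only [tri, h1]
      rw [max_eq_left (by have := ht.1; linarith)]
      push_cast; ring
    · apply intervalIntegral.integral_congr
      intro t ht
      rw [Set.uIcc_of_le (by linarith)] at ht
      have h1 : |t| = t := abs_of_nonneg ht.1
      rw [hg]
      simp only [tri, h1]
      rw [max_eq_left (by have := ht.2; linarith)]
      push_cast; ring
  have hI1 : (∫ t in (-c)..(0:ℝ), ((c+t : ℝ):ℂ) * Complex.exp (k*t))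
      = (c/k - 1/k^2) + Complex.exp (-(k*c))/k^2 := by
    have hprim : ∀ t : ℝ, HasDerivAt
        (fun s : ℝ => ((c+s : ℝ):ℂ)/k * Complex.exp (k*s) - Complex.exp (k*s)/k^2)
        (((c+t : ℝ):ℂ) * Complex.exp (k*t)) t := by
      intro t
      have ha : HasDerivAt (fun s : ℝ => ((c+s : ℝ):ℂ)/k) (1/k) t := by
        have : HasDerivAt (fun s : ℝ => ((c+s : ℝ):ℂ)) 1 t := by
          simpa using (Complex.ofRealCLM.hasDerivAt (x := t)).const_add (c:ℂ)
        simpa using this.div_const k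
      have := (ha.mul (hd_exp k t)).sub ((hd_exp k t).div_const (k^2))
      refine this.congr_deriv ?_
      field_simp
      ring
    rw [intervalIntegral.integral_eq_sub_of_hasDerivAt (fun t _ => hprim t)
      (by apply Continuous.intervalIntegrable; fun_prop)]
    push_cast
    rw [mul_neg, mul_zero, Complex.exp_zero]
    field_simp
    ring
  have hI2 : (∫ t in (0:ℝ)..c, ((c-t : ℝ):ℂ) * Complex.exp (k*t))
      = Complex.exp (k*c)/k^2 - (c/k + 1/k^2) := by
    have hprim : ∀ t : ℝ, HasDerivAt
        (fun s : ℝ => ((c-s : ℝ):ℂ)/k * Complex.exp (k*s) + Complex.exp (k*s)/k^2)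
        (((c-t : ℝ):ℂ) * Complex.exp (k*t)) t := by
      intro t
      have ha : HasDerivAt (fun s : ℝ => ((c-s : ℝ):ℂ)/k) (-1/k) t := by
        have : HasDerivAt (fun s : ℝ => ((c-s : ℝ):ℂ)) (-1) t := by
          simpa using ((Complex.ofRealCLM.hasDerivAt (x := t)).const_sub (c:ℂ))
        simpa using this.div_const k
      have := (ha.mul (hd_exp k t)).add ((hd_exp k t).div_const (k^2))
      refine this.congr_deriv ?_
      field_simp
      ring
    rw [intervalIntegral.integral_eq_sub_of_hasDerivAt (fun t _ => hprim t)
      (by apply Continuous.intervalIntegrable; fun_prop)]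
    push_cast
    rw [mul_zero, Complex.exp_zero]
    field_simp
    ring
  rw [h0, h1, h2, hI1, hI2]
  have hsum : (c/k - 1/k^2) + Complex.exp (-(k*c))/k^2
      + (Complex.exp (k*c)/k^2 - ((c:ℂ)/k + 1/k^2))
      = (Complex.exp (k*c) + Complex.exp (-(k*c)) - 2)/k^2 := by
    rw [div_eq_mul_inv (Complex.exp (k*c) + Complex.exp (-(k*c)) - 2)]
    ring
  rw [hsum]
  have hexp : Complex.exp (k*c) + Complex.exp (-(k*c)) = ((2 * Real.cos (2*π*x*c) : ℝ) : ℂ) := by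
    rw [hk]
    rw [show ((-(2*π*x):ℝ):ℂ) * Complex.I * c = (↑(-(2*π*x*c)) : ℂ) * Complex.I by push_cast; ring]
    rw [show -((↑(-(2*π*x*c)) : ℂ) * Complex.I) = (↑(2*π*x*c) : ℂ) * Complex.I by push_cast; ring]
    rw [Complex.exp_mul_I, Complex.exp_mul_I]
    rw [show ((-(2*π*x*c):ℝ):ℂ) = -((2*π*x*c : ℝ):ℂ) by push_cast; ring]
    rw [Complex.cos_neg, Complex.sin_neg, ← Complex.ofReal_cos]
    push_cast
    ring
  have hk2 : k^2 = ((-((2*π*x)^2) : ℝ) : ℂ) := by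
    rw [hk, mul_pow, Complex.I_sq]
    push_cast; ring
  rw [hexp, hk2]
  have hπx : (π*x) ≠ 0 := mul_ne_zero pi_ne_zero hx
  have hcos : 1 - Real.cos (2*π*x*c) = 2 * (Real.sin (π*c*x))^2 := by
    have h1 := Real.cos_two_mul (π*x*c)
    have h2 := Real.sin_sq_add_cos_sq (π*x*c)
    have h3 : 2*π*x*c = 2*(π*x*c) := by ring
    have h4 : π*c*x = π*x*c := by ring
    rw [h3, h4, h1]
    nlinarith [h2]
  have hreal : (2 * Real.cos (2*π*x*c) - 2)/(-((2*π*x)^2)) = fej c x := by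
    rw [fej]
    rw [div_eq_div_iff (neg_ne_zero.2 (by positivity)) (by positivity)]
    nlinarith [hcos]
  rw [show ((2 * Real.cos (2*π*x*c) : ℝ):ℂ) - 2 = ((2 * Real.cos (2*π*x*c) - 2 : ℝ):ℂ) by push_cast; ring]
  rw [← hreal]
  push_cast
  ring


lemma fej_measurable (c : ℝ) : Measurable (fej c) := by
  unfold fej
  fun_prop

lemma fej_le (c x : ℝ) : fej c x ≤ (π^2*c^2+1)/π^2 * (1+x^2)⁻¹ := by
  rcases eq_or_ne x 0 with rfl | hx
  · simp [fej]
    positivity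
  have hx2 : 0 < x^2 := by positivity
  have hπ : 0 < π^2 := by positivity
  rw [fej, div_le_iff₀ (by positivity)]
  have h1 : Real.sin (π*c*x)^2 ≤ (π*c*x)^2 := Real.sin_sq_le_sq
  have h2 : Real.sin (π*c*x)^2 ≤ 1 := Real.sin_sq_le_one _
  have key : Real.sin (π*c*x)^2 * (1+x^2) ≤ (π^2*c^2+1) * x^2 := by nlinarith
  have e : (π^2*c^2+1)/π^2 * (1+x^2)⁻¹ * (π*x)^2 = (π^2*c^2+1)*x^2/(1+x^2) := by
    field_simp
  rw [e, le_div_iff₀ (by positivity)]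
  linarith [key]

lemma fej_integrable {c : ℝ} : Integrable (fej c) := by
  apply Integrable.mono' (integrable_inv_one_add_sq.const_mul ((π^2*c^2+1)/π^2))
    (fej_measurable c).aestronglyMeasurable
  filter_upwards with x
  rw [Real.norm_eq_abs, _root_.abs_of_nonneg (fej_nonneg c x)]
  exact fej_le c x

lemma tri_hasCompactSupport (c : ℝ) : HasCompactSupport (fun t => (tri c t : ℂ)) := by
  apply HasCompactSupport.intro (isCompact_Icc (a := -c) (b := c))
  intro t ht
  have : c ≤ |t| := by
    simp only [Set.mem_Icc, not_and_or, not_le] at ht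
    rcases ht with h | h
    · exact le_trans (by linarith) (neg_le_abs t)
    · exact le_trans (le_of_lt h) (le_abs_self t)
  simp [tri_eq_zero this]

lemma tri_integrable (c : ℝ) : Integrable (fun t => (tri c t : ℂ)) :=
  (Complex.continuous_ofReal.comp (tri_continuous c)).integrable_of_hasCompactSupport
    (tri_hasCompactSupport c)

lemma fourier_tri_ae {c : ℝ} (hc : 0 < c) :
    𝓕 (fun t => (tri c t : ℂ)) =ᵐ[volume] fun x => (fej c x : ℂ) := by
  filter_upwards [compl_mem_ae_iff.2 (volume_singleton (a := (0:ℝ)))] with x hx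
  exact fourier_tri hc hx

lemma fourier_tri_integrable {c : ℝ} (hc : 0 < c) :
    Integrable (𝓕 (fun t => (tri c t : ℂ))) :=
  (fej_integrable.ofReal).congr (fourier_tri_ae hc).symm

/-- Fourier transform of the Fejér kernel is the triangle. -/
lemma fourier_fej {c : ℝ} (hc : 0 < c) (s : ℝ) :
    ∫ x, (fej c x : ℂ) * Complex.exp ((-(2*π*x*s) : ℝ) * Complex.I) = (tri c s : ℂ) := by
  have hinv := (tri_integrable c).fourierInv_fourier_eq (fourier_tri_integrable hc)
    ((Complex.continuous_ofReal.comp (tri_continuous c)).continuousAt (x := -s))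
  rw [Real.fourierInv_eq_fourier_neg] at hinv
  have : 𝓕 (𝓕 fun t => (tri c t : ℂ)) s = (tri c (-s) : ℂ) := by rw [← hinv]; norm_num
  rw [Real.fourier_real_eq_integral_exp_smul] at this
  have habs : |(-s : ℝ)| = |s| := abs_neg s
  have htris : tri c (-s) = tri c s := by rw [tri, tri, habs]
  rw [htris] at this
  rw [← this]
  apply integral_congr_ae
  filter_upwards [fourier_tri_ae hc] with x hx
  rw [hx, smul_eq_mul, mul_comm]
  congr 2
  push_cast
  ring


noncomputable def Fm (μ : Measure ℝ) (x : ℝ) : ℂ :=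
  ∫ l, Complex.exp (-(2 * π * x * l : ℝ) * Complex.I) ∂μ

section
variable (μ : Measure ℝ) [IsFiniteMeasure μ]

lemma Fm_cont : Continuous (Fm μ) := by
  apply continuous_of_dominated (bound := fun _ => (1:ℝ))
  · intro x
    apply Continuous.aestronglyMeasurable
    continuity
  · intro x
    filter_upwards with l
    rw [show (-(2 * π * x * l : ℝ) : ℂ) * Complex.I = ((-(2 * π * x * l) : ℝ) : ℂ) * Complex.I by push_cast; ring]
    rw [Complex.norm_exp_ofReal_mul_I]
  · exact integrable_const 1
  · filter_upwards with l
    continuity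

lemma Fm_norm_le (x : ℝ) : ‖Fm μ x‖ ≤ (μ Set.univ).toReal := by
  calc ‖Fm μ x‖ ≤ ∫ l, ‖Complex.exp (-(2 * π * x * l : ℝ) * Complex.I)‖ ∂μ :=
        norm_integral_le_integral_norm _
  _ = ∫ l, (1:ℝ) ∂μ := by
        congr 1; ext l
        rw [show (-(2 * π * x * l : ℝ) : ℂ) * Complex.I = ((-(2 * π * x * l) : ℝ) : ℂ) * Complex.I by push_cast; ring]
        rw [Complex.norm_exp_ofReal_mul_I]
  _ = (μ Set.univ).toReal := by simp; rfl

lemma key_identity {c : ℝ} (hc : 0 < c) :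
    ∫ p : ℝ × ℝ, tri c (p.1 - p.2) ∂(μ.prod μ) = ∫ x, fej c x * ‖Fm μ x‖^2 := by
  set P := μ.prod μ with hP
  set f : ℝ → ℝ × ℝ → ℂ :=
    fun x p => (fej c x : ℂ) * Complex.exp ((-(2*π*x*(p.1-p.2)) : ℝ) * Complex.I) with hf
  have hnorm : ∀ x p, ‖f x p‖ = fej c x := by
    intro x p
    rw [hf]
    simp only [norm_mul, Complex.norm_exp_ofReal_mul_I, mul_one, Complex.norm_real,
      Real.norm_eq_abs]
    exact _root_.abs_of_nonneg (fej_nonneg c x)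
  have hexpc : ∀ {α : Type} [TopologicalSpace α] (g : α → ℝ), Continuous g →
      Continuous (fun z : α => Complex.exp ((g z : ℝ) * Complex.I)) := by
    intro α _ g hg
    exact Complex.continuous_exp.comp ((Complex.continuous_ofReal.comp hg).mul continuous_const)
  have hmeas : AEStronglyMeasurable (Function.uncurry f) (volume.prod P) := by
    apply Measurable.aestronglyMeasurable
    simp only [hf, Function.uncurry]
    apply Measurable.mul
    · exact Complex.measurable_ofReal.comp ((fej_measurable c).comp measurable_fst)
    · exact (hexpc (fun z : ℝ × (ℝ × ℝ) => -(2*π*z.1*(z.2.1-z.2.2))) (by fun_prop)).measurable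
  have hint : Integrable (Function.uncurry f) (volume.prod P) := by
    rw [integrable_prod_iff hmeas]
    constructor
    · filter_upwards with x
      have : Integrable (f x) P := by
        apply Integrable.mono' (integrable_const (fej c x))
        · simp only [hf]
          exact (continuous_const.mul (hexpc (fun p : ℝ × ℝ => -(2*π*x*(p.1-p.2)))
            (by fun_prop))).aestronglyMeasurable
        · filter_upwards with p
          rw [hnorm]
      exact this
    · apply Integrable.congr (fej_integrable.mul_const (P Set.univ).toReal)
      filter_upwards with x
      have : ∀ p, ‖Function.uncurry f (x, p)‖ = fej c x := fun p => hnorm x p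
      simp only [Function.uncurry] at this ⊢
      rw [show (∫ p, ‖f x p‖ ∂P) = ∫ _p, fej c x ∂P from integral_congr_ae (by filter_upwards with p using hnorm x p)]
      rw [integral_const, smul_eq_mul, mul_comm]
      rfl
  have hswap := integral_integral_swap hint
  -- RHS of swap equals ↑(∫ tri)
  have hrhs : ∫ p, ∫ x, f x p ∂volume ∂P = ((∫ p : ℝ × ℝ, tri c (p.1 - p.2) ∂P : ℝ) : ℂ) := by
    have hcast : ∫ p, ((tri c (p.1-p.2) : ℝ):ℂ) ∂P = ((∫ p : ℝ × ℝ, tri c (p.1-p.2) ∂P : ℝ):ℂ) :=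
      integral_ofReal (𝕜 := ℂ)
    rw [← hcast]
    apply integral_congr_ae
    filter_upwards with p
    exact fourier_fej hc (p.1 - p.2)
  -- LHS of swap equals ↑(∫ fej * ‖Fm‖²)
  have hinner : ∀ x : ℝ, ∫ p, f x p ∂P = ((fej c x * ‖Fm μ x‖^2 : ℝ) : ℂ) := by
    intro x
    rw [hf]
    simp only
    rw [integral_const_mul]
    have hsplit : ∀ p : ℝ × ℝ, Complex.exp ((-(2*π*x*(p.1-p.2)) : ℝ) * Complex.I)
        = Complex.exp ((-(2*π*x*p.1) : ℝ) * Complex.I) * Complex.exp (((2*π*x*p.2) : ℝ) * Complex.I) := by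
      intro p
      rw [← Complex.exp_add]
      congr 1
      push_cast
      ring
    rw [integral_congr_ae (Filter.Eventually.of_forall fun p => by rw [hsplit p])]
    rw [integral_prod_mul (μ := μ) (ν := μ)
      (f := fun τ => Complex.exp ((-(2*π*x*τ) : ℝ) * Complex.I))
      (g := fun l => Complex.exp (((2*π*x*l) : ℝ) * Complex.I))]
    have h1 : (∫ τ, Complex.exp ((-(2*π*x*τ) : ℝ) * Complex.I) ∂μ) = Fm μ x := by
      rw [Fm]
      congr 1; ext τ
      congr 1
      push_cast; ring
    have h2 : (∫ l, Complex.exp (((2*π*x*l) : ℝ) * Complex.I) ∂μ) = (starRingEnd ℂ) (Fm μ x) := by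
      rw [Fm, ← integral_conj]
      apply integral_congr_ae
      filter_upwards with l
      rw [← Complex.exp_conj, map_mul, Complex.conj_I, map_neg, Complex.conj_ofReal]
      congr 1
      push_cast; ring
    rw [h1, h2, Complex.mul_conj, Complex.normSq_eq_norm_sq]
    push_cast
    rfl
  have hlhs : ∫ x, ∫ p, f x p ∂P ∂volume = ((∫ x, fej c x * ‖Fm μ x‖^2 : ℝ) : ℂ) := by
    have hcast : ∫ x, ((fej c x * ‖Fm μ x‖^2 : ℝ):ℂ) = ((∫ x, fej c x * ‖Fm μ x‖^2 : ℝ):ℂ) :=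
      integral_ofReal (𝕜 := ℂ)
    rw [← hcast]
    exact integral_congr_ae (Filter.Eventually.of_forall hinner)
  rw [hlhs, hrhs] at hswap
  exact_mod_cast hswap.symm
end


noncomputable def Hh (μ : Measure ℝ) (c : ℝ) : ℝ≥0∞ :=
  ∫⁻ p, ENNReal.ofReal (tri c (p.1 - p.2)) ∂(μ.prod μ)

noncomputable def Mm (μ : Measure ℝ) (ε : ℝ) : ℝ≥0∞ :=
  (μ.prod μ) {p : ℝ × ℝ | |p.1 - p.2| < ε}

noncomputable def Ll (μ : Measure ℝ) : ℝ≥0∞ := ∫⁻ x, (‖Fm μ x‖₊ : ℝ≥0∞)^2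

lemma E_measurable (ε : ℝ) : MeasurableSet {p : ℝ × ℝ | |p.1 - p.2| < ε} :=
  measurableSet_lt (measurable_fst.sub measurable_snd).abs measurable_const

section
variable (μ : Measure ℝ) [IsFiniteMeasure μ]

lemma tri_int_P (c : ℝ) : Integrable (fun p : ℝ × ℝ => tri c (p.1 - p.2)) (μ.prod μ) := by
  apply Integrable.mono' (integrable_const (max c 0))
  · exact ((tri_continuous c).comp (continuous_fst.sub continuous_snd)).aestronglyMeasurable
  · filter_upwards with p
    rw [Real.norm_eq_abs, _root_.abs_of_nonneg (tri_nonneg _ _)]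
    exact tri_le _ _

lemma fejFm_int (c : ℝ) : Integrable (fun x => fej c x * ‖Fm μ x‖^2) := by
  apply Integrable.mono' (fej_integrable.mul_const ((μ Set.univ).toReal^2))
  · exact ((fej_measurable c).mul ((Fm_cont μ).norm.pow 2).measurable).aestronglyMeasurable
  · filter_upwards with x
    rw [Real.norm_eq_abs, _root_.abs_of_nonneg (mul_nonneg (fej_nonneg c x) (by positivity))]
    exact mul_le_mul_of_nonneg_left
      (pow_le_pow_left₀ (norm_nonneg _) (Fm_norm_le μ x) 2) (fej_nonneg c x)

lemma key_identity' {c : ℝ} (hc : 0 < c) :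
    Hh μ c = ∫⁻ x, ENNReal.ofReal (fej c x) * (‖Fm μ x‖₊ : ℝ≥0∞)^2 := by
  rw [Hh, ← ofReal_integral_eq_lintegral_ofReal (tri_int_P μ c)
    (Filter.Eventually.of_forall fun p => tri_nonneg _ _)]
  rw [key_identity μ hc]
  rw [ofReal_integral_eq_lintegral_ofReal (fejFm_int μ c)
    (Filter.Eventually.of_forall fun x => mul_nonneg (fej_nonneg c x) (by positivity))]
  apply lintegral_congr
  intro x
  rw [ENNReal.ofReal_mul (fej_nonneg c x), ENNReal.ofReal_pow (norm_nonneg _),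
    ofReal_norm, enorm_eq_nnnorm]

lemma stmt_eq (ε : ℝ) : ∫⁻ τ, μ (Set.Ioo (τ - ε) (τ + ε)) ∂μ = Mm μ ε := by
  rw [Mm, Measure.prod_apply (E_measurable ε)]
  apply lintegral_congr
  intro τ
  congr 1
  ext l
  simp only [Set.mem_preimage, Set.mem_setOf_eq, Set.mem_Ioo, abs_sub_lt_iff]
  constructor
  · rintro ⟨h1, h2⟩; constructor <;> linarith
  · rintro ⟨h1, h2⟩; constructor <;> linarith

-- pointwise inequalities
lemma tri_ineq1 {ε : ℝ} (d : ℝ) : tri ε d ≤ (if |d| < ε then ε else 0) := by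
  by_cases h : |d| < ε
  · rw [if_pos h, tri]
    apply max_le (by linarith [abs_nonneg d]) (by linarith [abs_nonneg d])
  · rw [if_neg h, tri_eq_zero (le_of_not_gt h)]

lemma tri_of_le {c d : ℝ} (h : |d| ≤ c) : tri c d = c - |d| := max_eq_left (by linarith)

lemma tri_ineq2 {a ε : ℝ} (h0 : 0 ≤ a) (h : a ≤ ε) (d : ℝ) :
    tri ε d ≤ (if |d| < ε then ε - a else 0) + tri a d := by
  by_cases hd : |d| < ε
  · rw [if_pos hd, tri_of_le hd.le]
    rcases le_or_gt (|d|) a with h1 | h1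
    · rw [tri_of_le h1]; linarith
    · have := tri_nonneg a d; linarith
  · rw [if_neg hd, tri_eq_zero (le_of_not_gt hd), zero_add]
    exact tri_nonneg _ _

lemma tri_ineq3 {ε b : ℝ} (h0 : 0 < ε) (h : ε ≤ b) (d : ℝ) :
    (if |d| < ε then b - ε else 0) + tri ε d ≤ tri b d := by
  by_cases hd : |d| < ε
  · rw [if_pos hd, tri_of_le hd.le, tri_of_le (by linarith : |d| ≤ b)]
    linarith
  · rw [if_neg hd, tri_eq_zero (le_of_not_gt hd), zero_add]
    exact tri_nonneg _ _

-- lintegral of the indicator-type function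
lemma lint_ind (r ε : ℝ) (hr : 0 ≤ r) :
    ∫⁻ p : ℝ × ℝ, ENNReal.ofReal (if |p.1 - p.2| < ε then r else 0) ∂(μ.prod μ)
      = ENNReal.ofReal r * Mm μ ε := by
  have : ∀ p : ℝ × ℝ, ENNReal.ofReal (if |p.1 - p.2| < ε then r else 0)
      = Set.indicator {q : ℝ × ℝ | |q.1 - q.2| < ε} (fun _ => ENNReal.ofReal r) p := by
    intro p
    by_cases h : |p.1 - p.2| < ε
    · simp [Set.indicator, h]
    · simp [Set.indicator, h]
  rw [lintegral_congr this, lintegral_indicator (E_measurable ε), setLIntegral_const, Mm]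

lemma H_le1 {ε : ℝ} (hε : 0 < ε) : Hh μ ε ≤ ENNReal.ofReal ε * Mm μ ε := by
  rw [← lint_ind μ ε ε hε.le, Hh]
  exact lintegral_mono fun p => ENNReal.ofReal_le_ofReal (tri_ineq1 _)

lemma H_le2 {a ε : ℝ} (h0 : 0 < a) (h : a ≤ ε) :
    Hh μ ε ≤ ENNReal.ofReal (ε - a) * Mm μ ε + Hh μ a := by
  rw [← lint_ind μ (ε - a) ε (by linarith), Hh, Hh, ← lintegral_add_left]
  · apply lintegral_mono fun p => ?_
    rw [← ENNReal.ofReal_add (by split <;> linarith) (tri_nonneg _ _)]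
    exact ENNReal.ofReal_le_ofReal (tri_ineq2 h0.le h _)
  · apply Measurable.ennreal_ofReal
    exact Measurable.ite (measurableSet_lt (measurable_fst.sub measurable_snd).abs measurable_const)
      measurable_const measurable_const

lemma H_le3 {ε b : ℝ} (h0 : 0 < ε) (h : ε ≤ b) :
    ENNReal.ofReal (b - ε) * Mm μ ε + Hh μ ε ≤ Hh μ b := by
  rw [← lint_ind μ (b - ε) ε (by linarith), Hh, Hh, ← lintegral_add_left]
  · apply lintegral_mono fun p => ?_
    rw [← ENNReal.ofReal_add (by split <;> linarith) (tri_nonneg _ _)]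
    exact ENNReal.ofReal_le_ofReal (tri_ineq3 h0 h _)
  · apply Measurable.ennreal_ofReal
    exact Measurable.ite (measurableSet_lt (measurable_fst.sub measurable_snd).abs measurable_const)
      measurable_const measurable_const

lemma H_lt_top {c : ℝ} : Hh μ c < ⊤ := by
  apply lt_of_le_of_lt (lintegral_mono (fun p => ENNReal.ofReal_le_ofReal (tri_le c _)))
  rw [lintegral_const]
  exact ENNReal.mul_lt_top ENNReal.ofReal_lt_top (measure_lt_top _ _)

lemma M_lt_top {ε : ℝ} : Mm μ ε < ⊤ := lt_of_le_of_lt (measure_mono (Set.subset_univ _)) (measure_lt_top _ _)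
end


noncomputable def Gg (μ : Measure ℝ) (c : ℝ) : ℝ≥0∞ := (ENNReal.ofReal (c^2))⁻¹ * Hh μ c

lemma fej_div_le_one {c x : ℝ} (hc : 0 < c) : fej c x / c^2 ≤ 1 := by
  rcases eq_or_ne x 0 with rfl | hx
  · simp [fej]
  rw [fej, div_div]
  rw [show (π*x)^2 * c^2 = (π*c*x)^2 by ring]
  rw [div_le_one (by positivity)]
  exact Real.sin_sq_le_sq

lemma sin_div_tendsto : Tendsto (fun y : ℝ => Real.sin y / y) (nhdsWithin 0 {(0:ℝ)}ᶜ) (nhds 1) := by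
  have h := (Real.hasDerivAt_sin 0)
  rw [hasDerivAt_iff_tendsto_slope] at h
  rw [Real.cos_zero] at h
  apply h.congr'
  filter_upwards with y
  rw [slope_def_field]
  rw [Real.sin_zero]
  simp [div_eq_mul_inv]

section
variable (μ : Measure ℝ) [IsFiniteMeasure μ]

lemma w_measurable : Measurable (fun x => (‖Fm μ x‖₊ : ℝ≥0∞)^2) :=
  ((Fm_cont μ).measurable.nnnorm.coe_nnreal_ennreal).pow_const 2

lemma G_eq {c : ℝ} (hc : 0 < c) :
    Gg μ c = ∫⁻ x, ENNReal.ofReal (fej c x / c^2) * (‖Fm μ x‖₊ : ℝ≥0∞)^2 := by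
  rw [Gg, key_identity' μ hc, ← lintegral_const_mul' _ _
    (ENNReal.inv_ne_top.2 (ENNReal.ofReal_pos.2 (by positivity)).ne')]
  apply lintegral_congr
  intro x
  rw [ENNReal.ofReal_div_of_pos (by positivity), ENNReal.div_eq_inv_mul, mul_assoc]

lemma G_tendsto (u : ℕ → ℝ) (hu : ∀ n, 0 < u n) (hu0 : Tendsto u atTop (𝓝 0)) :
    Tendsto (fun n => Gg μ (u n)) atTop (𝓝 (Ll μ)) := by
  set w : ℝ → ℝ≥0∞ := fun x => (‖Fm μ x‖₊ : ℝ≥0∞)^2 with hw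
  have hGeq : ∀ n, Gg μ (u n) = ∫⁻ x, ENNReal.ofReal (fej (u n) x / (u n)^2) * w x :=
    fun n => G_eq μ (hu n)
  have hup : ∀ n, (fun x => ENNReal.ofReal (fej (u n) x / (u n)^2) * w x) ≤ w := by
    intro n x
    calc ENNReal.ofReal (fej (u n) x / (u n)^2) * w x
        ≤ 1 * w x := by
          apply mul_le_mul_left
          exact ENNReal.ofReal_le_one.2 (fej_div_le_one (hu n))
      _ = w x := one_mul _
  have hbound : ∀ n, Gg μ (u n) ≤ Ll μ := by
    intro n
    rw [hGeq n]
    exact lintegral_mono (hup n)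
  have hmeas : ∀ n, Measurable (fun x => ENNReal.ofReal (fej (u n) x / (u n)^2) * w x) := by
    intro n
    exact (((fej_measurable (u n)).div_const _).ennreal_ofReal).mul (w_measurable μ)
  -- pointwise convergence for x ≠ 0
  have hptw : ∀ x : ℝ, x ≠ 0 →
      Tendsto (fun n => ENNReal.ofReal (fej (u n) x / (u n)^2) * w x) atTop (𝓝 (w x)) := by
    intro x hx
    have hθ : Tendsto (fun n => π * u n * x) atTop (nhdsWithin 0 {(0:ℝ)}ᶜ) := by
      rw [tendsto_nhdsWithin_iff]
      constructor
      · have : Tendsto (fun n => π * u n * x) atTop (𝓝 (π * 0 * x)) := by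
          exact ((tendsto_const_nhds.mul hu0).mul tendsto_const_nhds)
        simpa using this
      · filter_upwards with n
        simp only [Set.mem_compl_iff, Set.mem_singleton_iff]
        exact mul_ne_zero (mul_ne_zero pi_ne_zero (hu n).ne') hx
    have hsin : Tendsto (fun n => Real.sin (π * u n * x) / (π * u n * x)) atTop (𝓝 1) :=
      sin_div_tendsto.comp hθ
    have hsq : Tendsto (fun n => (Real.sin (π * u n * x) / (π * u n * x))^2) atTop (𝓝 1) := by
      have := hsin.mul hsin
      simpa [sq] using this
    have heq : ∀ n, fej (u n) x / (u n)^2 = (Real.sin (π * u n * x) / (π * u n * x))^2 := by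
      intro n
      rw [fej, div_div, div_pow]
      congr 1
      ring
    have h1 : Tendsto (fun n => ENNReal.ofReal (fej (u n) x / (u n)^2)) atTop (𝓝 1) := by
      rw [show (1 : ℝ≥0∞) = ENNReal.ofReal 1 by simp]
      apply ENNReal.tendsto_ofReal
      rw [show (1:ℝ) = (1:ℝ) from rfl]
      exact Tendsto.congr (fun n => (heq n).symm) hsq
    have hwne : w x ≠ ⊤ := ENNReal.pow_ne_top ENNReal.coe_ne_top
    have := ENNReal.Tendsto.mul_const h1 (Or.inr hwne)
    simpa using this
  -- liminf ≥ L via Fatou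
  have hliminf : Ll μ ≤ liminf (fun n => Gg μ (u n)) atTop := by
    have hae : ∀ᵐ x : ℝ, x ≠ 0 := by
      rw [ae_iff]
      simp only [ne_eq, not_not]
      rw [show {x : ℝ | x = 0} = {(0:ℝ)} by ext; simp]
      exact volume_singleton
    have h1 : Ll μ = ∫⁻ x, liminf (fun n => ENNReal.ofReal (fej (u n) x / (u n)^2) * w x) atTop := by
      rw [Ll]
      apply lintegral_congr_ae
      filter_upwards [hae] with x hx
      rw [(hptw x hx).liminf_eq]
    calc Ll μ = _ := h1
      _ ≤ liminf (fun n => ∫⁻ x, ENNReal.ofReal (fej (u n) x / (u n)^2) * w x) atTop :=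
          lintegral_liminf_le hmeas
      _ = liminf (fun n => Gg μ (u n)) atTop := by
          apply Filter.liminf_congr
          filter_upwards with n
          rw [hGeq n]
  have hlimsup : limsup (fun n => Gg μ (u n)) atTop ≤ Ll μ :=
    Filter.limsup_le_of_le (by isBoundedDefault) (Filter.Eventually.of_forall hbound)
  exact tendsto_of_le_liminf_of_limsup_le hliminf hlimsup
end


noncomputable def Qq (μ : Measure ℝ) (ε : ℝ) : ℝ≥0∞ := (ENNReal.ofReal (2*ε))⁻¹ * Mm μ ε

lemma ofReal_inv_mul {a b : ℝ} (ha : 0 < a) :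
    (ENNReal.ofReal a)⁻¹ * ENNReal.ofReal b = ENNReal.ofReal (b / a) := by
  rw [ENNReal.ofReal_div_of_pos ha, ENNReal.div_eq_inv_mul]

lemma termQ {x ε : ℝ} (hε : 0 < ε) (m : ℝ≥0∞) :
    ENNReal.ofReal x * ((ENNReal.ofReal (2*ε))⁻¹ * m) = ENNReal.ofReal (x/(2*ε)) * m := by
  rw [← mul_assoc, mul_comm (ENNReal.ofReal x), ofReal_inv_mul (by positivity)]

lemma termH {r ε : ℝ} (hε : 0 < ε) (m : ℝ≥0∞) :
    (ENNReal.ofReal (ε^2))⁻¹ * (ENNReal.ofReal r * m) = ENNReal.ofReal (r/ε^2) * m := by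
  rw [← mul_assoc, ofReal_inv_mul (by positivity)]

lemma inv_sq_scale {ε θ : ℝ} (hε : 0 < ε) (hθ : 0 < θ) :
    (ENNReal.ofReal (ε^2))⁻¹ = ENNReal.ofReal (θ^2) * (ENNReal.ofReal ((θ*ε)^2))⁻¹ := by
  rw [show ((θ*ε)^2) = θ^2 * ε^2 by ring, ENNReal.ofReal_mul (by positivity),
    ENNReal.mul_inv (Or.inl (ENNReal.ofReal_pos.2 (by positivity)).ne') (Or.inl ENNReal.ofReal_ne_top),
    ← mul_assoc, ENNReal.mul_inv_cancel (ENNReal.ofReal_pos.2 (by positivity)).ne' ENNReal.ofReal_ne_top,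
    one_mul]

section
variable (μ : Measure ℝ) [IsFiniteMeasure μ]
lemma hIC {ε : ℝ} (hε : 0 < ε) : Gg μ ε ≤ ENNReal.ofReal 2 * Qq μ ε := by
  rw [Gg, Qq, termQ hε]
  calc (ENNReal.ofReal (ε^2))⁻¹ * Hh μ ε
      ≤ (ENNReal.ofReal (ε^2))⁻¹ * (ENNReal.ofReal ε * Mm μ ε) := mul_le_mul_right (H_le1 μ hε) _
    _ = ENNReal.ofReal (ε/ε^2) * Mm μ ε := termH hε _
    _ = ENNReal.ofReal (2/(2*ε)) * Mm μ ε := by rw [show ε/ε^2 = 2/(2*ε) by field_simp]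

lemma hIA {ε θ : ℝ} (hε : 0 < ε) (hθ0 : 0 < θ) (hθ1 : θ < 1) :
    Gg μ ε ≤ ENNReal.ofReal (2*(1-θ)) * Qq μ ε + ENNReal.ofReal (θ^2) * Gg μ (θ*ε) := by
  rw [Gg, Qq, Gg, termQ hε]
  calc (ENNReal.ofReal (ε^2))⁻¹ * Hh μ ε
      ≤ (ENNReal.ofReal (ε^2))⁻¹ * (ENNReal.ofReal (ε - θ*ε) * Mm μ ε + Hh μ (θ*ε)) :=
        mul_le_mul_right (H_le2 μ (by positivity) (by nlinarith)) _
    _ = ENNReal.ofReal ((ε-θ*ε)/ε^2) * Mm μ ε + (ENNReal.ofReal (ε^2))⁻¹ * Hh μ (θ*ε) := by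
        rw [mul_add, termH hε]
    _ = ENNReal.ofReal (2*(1-θ)/(2*ε)) * Mm μ ε
        + ENNReal.ofReal (θ^2) * ((ENNReal.ofReal ((θ*ε)^2))⁻¹ * Hh μ (θ*ε)) := by
        rw [show (ε-θ*ε)/ε^2 = 2*(1-θ)/(2*ε) by field_simp, inv_sq_scale hε hθ0, mul_assoc]

lemma hIB {ε θ : ℝ} (hε : 0 < ε) (hθ0 : 0 < θ) (hθ1 : θ < 1) :
    ENNReal.ofReal (2*(1/θ-1)) * Qq μ ε + Gg μ ε ≤ ENNReal.ofReal (1/θ^2) * Gg μ (ε/θ) := by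
  rw [Gg, Qq, Gg, termQ hε]
  have hεθ : ε ≤ ε/θ := by
    rw [le_div_iff₀ hθ0]; nlinarith
  calc ENNReal.ofReal (2*(1/θ-1)/(2*ε)) * Mm μ ε + (ENNReal.ofReal (ε^2))⁻¹ * Hh μ ε
      = ENNReal.ofReal ((ε/θ-ε)/ε^2) * Mm μ ε + (ENNReal.ofReal (ε^2))⁻¹ * Hh μ ε := by
        rw [show (ε/θ-ε)/ε^2 = 2*(1/θ-1)/(2*ε) by field_simp]
    _ = (ENNReal.ofReal (ε^2))⁻¹ * (ENNReal.ofReal (ε/θ-ε) * Mm μ ε + Hh μ ε) := by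
        rw [mul_add, termH hε]
    _ ≤ (ENNReal.ofReal (ε^2))⁻¹ * Hh μ (ε/θ) := mul_le_mul_right (H_le3 μ hε hεθ) _
    _ = ENNReal.ofReal (1/θ^2) * ((ENNReal.ofReal ((ε/θ)^2))⁻¹ * Hh μ (ε/θ)) := by
        rw [inv_sq_scale hε (show (0:ℝ) < 1/θ by positivity)]
        rw [show (1/θ*ε) = ε/θ by ring, show (1/θ)^2 = 1/θ^2 by ring, mul_assoc]

end


lemma ofReal_sub_add (a b : ℝ) :
    ENNReal.ofReal a ≤ ENNReal.ofReal (a - b) + ENNReal.ofReal b := by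
  rcases le_total b 0 with h | h
  · exact le_trans (ENNReal.ofReal_le_ofReal (by linarith)) le_self_add
  · rcases le_total a b with h2 | h2
    · exact le_trans (ENNReal.ofReal_le_ofReal h2) le_add_self
    · rw [← ENNReal.ofReal_add (by linarith) h, sub_add_cancel]

section
variable (μ : Measure ℝ) [IsFiniteMeasure μ]
set_option maxHeartbeats 1000000 in
lemma main_seq (ε : ℕ → ℝ) (hε : ∀ n, 0 < ε n) (h0 : Tendsto ε atTop (𝓝 0)) :
    Tendsto (fun n => Qq μ (ε n)) atTop (𝓝 (Ll μ)) := by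
  have hGε := G_tendsto μ ε hε h0
  apply tendsto_of_le_liminf_of_limsup_le
  · -- Ll μ ≤ liminf
    refine (le_liminf_iff (by isBoundedDefault) (by isBoundedDefault)).2 fun b hb => ?_
    by_cases hT : Ll μ = ⊤
    · have hbt : b < ⊤ := hT ▸ hb
      have h2b : ENNReal.ofReal 2 * b < ⊤ :=
        ENNReal.mul_lt_top ENNReal.ofReal_lt_top hbt
      have hev := hGε.eventually (eventually_gt_nhds (show ENNReal.ofReal 2 * b < Ll μ from hT ▸ h2b))
      filter_upwards [hev] with n hn
      have hlt := lt_of_lt_of_le hn (hIC μ (hε n))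
      rwa [ENNReal.mul_lt_mul_iff_right (by simp) ENNReal.ofReal_ne_top] at hlt
    · -- finite case
      set l := (Ll μ).toReal with hl
      have hLl : Ll μ = ENNReal.ofReal l := (ENNReal.ofReal_toReal hT).symm
      have hL0 : Ll μ ≠ 0 := (show (0:ℝ≥0∞) < Ll μ from lt_of_le_of_lt (by simp) hb).ne'
      have hl0 : 0 < l := ENNReal.toReal_pos hL0 hT
      have hbT : b ≠ ⊤ := (hb.trans_le le_top).ne
      set β := b.toReal with hβdef
      have hbβ : b = ENNReal.ofReal β := (ENNReal.ofReal_toReal hbT).symm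
      have hβ : β < l := by
        rw [hβdef, hl]
        exact (ENNReal.toReal_lt_toReal hbT hT).2 hb
      have hβ0 : 0 ≤ β := ENNReal.toReal_nonneg
      set θ : ℝ := (β/l + 1)/2 with hθdef
      have hθ0 : 0 < θ := by positivity
      have hθ1 : θ < 1 := by
        rw [hθdef, div_lt_one (by norm_num)]
        have : β/l < 1 := (div_lt_one hl0).2 hβ
        linarith
      have hlθ : l*θ = (β+l)/2 := by rw [hθdef]; field_simp
      have hkey1 : 2*β < l*(1+θ) := by nlinarith
      have hkey : 2*(1-θ)*β < l*(1-θ^2) := by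
        nlinarith [mul_pos (sub_pos.2 hθ1) (sub_pos.2 hkey1)]
      set γ : ℝ := (l*(1-θ^2) - 2*(1-θ)*β)/4 with hγdef
      have hγ0 : 0 < γ := div_pos (sub_pos.2 hkey) (by norm_num)
      have hθsq : θ^2 < 1 := by nlinarith
      have hfinal : 2*(1-θ)*β + θ^2*(l+γ) ≤ l - γ := by
        rw [hγdef]; nlinarith
      have hev1 : ∀ᶠ n in atTop, ENNReal.ofReal (l - γ) < Gg μ (ε n) := by
        apply hGε.eventually (eventually_gt_nhds _)
        rw [hLl]
        exact (ENNReal.ofReal_lt_ofReal_iff hl0).2 (by linarith)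
      have hGθ := G_tendsto μ (fun n => θ * ε n) (fun n => mul_pos hθ0 (hε n))
        (by simpa using h0.const_mul θ)
      have hev2 : ∀ᶠ n in atTop, Gg μ (θ * ε n) < ENNReal.ofReal (l + γ) := by
        apply hGθ.eventually (eventually_lt_nhds _)
        rw [hLl]
        exact (ENNReal.ofReal_lt_ofReal_iff (by linarith)).2 (by linarith)
      filter_upwards [hev1, hev2] with n h1 h2
      by_contra hQ
      push_neg at hQ
      have chain : ENNReal.ofReal (l - γ) <
          ENNReal.ofReal (2*(1-θ)*β + θ^2*(l+γ)) := by
        calc ENNReal.ofReal (l - γ) < Gg μ (ε n) := h1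
          _ ≤ ENNReal.ofReal (2*(1-θ)) * Qq μ (ε n) + ENNReal.ofReal (θ^2) * Gg μ (θ * ε n) :=
              hIA μ (hε n) hθ0 hθ1
          _ ≤ ENNReal.ofReal (2*(1-θ)) * b + ENNReal.ofReal (θ^2) * ENNReal.ofReal (l+γ) :=
              add_le_add (mul_le_mul_right hQ _) (mul_le_mul_right h2.le _)
          _ = ENNReal.ofReal (2*(1-θ)*β + θ^2*(l+γ)) := by
              rw [hbβ, ← ENNReal.ofReal_mul (by nlinarith), ← ENNReal.ofReal_mul (by positivity),
                ← ENNReal.ofReal_add (by nlinarith) (by nlinarith)]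
      exact absurd chain (not_lt.2 (ENNReal.ofReal_le_ofReal hfinal))
  · -- limsup ≤ Ll μ
    apply ENNReal.le_of_forall_pos_le_add
    intro δ hδ hLt
    have hT : Ll μ ≠ ⊤ := hLt.ne
    set l := (Ll μ).toReal with hl
    have hLl : Ll μ = ENNReal.ofReal l := (ENNReal.ofReal_toReal hT).symm
    have hl0 : 0 ≤ l := ENNReal.toReal_nonneg
    set d : ℝ := (δ : ℝ) with hd
    have hd0 : 0 < d := hδ
    set e : ℝ := d/4 with he
    have he0 : 0 < e := by positivity
    set θ : ℝ := max (1/2) (l/(l+e)) with hθdef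
    have hθ0 : 0 < θ := lt_of_lt_of_le (by norm_num) (le_max_left _ _)
    have hθ1 : θ < 1 := by
      apply max_lt (by norm_num)
      rw [div_lt_one (by linarith)]
      linarith
    have hls : l * (1/θ - 1) ≤ e := by
      have h1 : l/(l+e) ≤ θ := le_max_right _ _
      have h2 : l ≤ θ * (l+e) := by
        rw [div_le_iff₀ (by linarith)] at h1
        linarith
      have h3 : l * (1/θ) ≤ l + e := by
        rw [mul_one_div, div_le_iff₀ hθ0]
        nlinarith
      nlinarith
    set γ : ℝ := e*(1/θ-1)/(1/θ^2+1) with hγdef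
    have hsθ : 1 < 1/θ := (one_lt_one_div hθ0 hθ1)
    have hγ0 : 0 < γ := by
      apply div_pos (by nlinarith) (by positivity)
    have hγeq : γ * (1/θ^2+1) = e * (1/θ-1) := by
      rw [hγdef, div_mul_cancel₀]
      positivity
    -- the real inequality
    have hreal : (l+γ)*(1/θ^2) - (l-γ) ≤ 2*(1/θ-1)*(l+d/2) := by
      have hu : 0 < 1/θ - 1 := by linarith
      have expand : (l+γ)*(1/θ^2) - (l-γ) = l*(1/θ^2-1) + γ*(1/θ^2+1) := by ring
      rw [expand, hγeq]
      have hsq : 1/θ^2 = (1/θ)^2 := by rw [one_div, one_div, inv_pow]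
      rw [hsq]
      -- l((1/θ)²−1) + e(1/θ−1) = (1/θ−1)(l(1/θ+1) + e) ≤ (1/θ−1)(2l+d)
      have step : l*((1/θ)^2-1) + e*(1/θ-1) = (1/θ-1)*(l*(1/θ+1) + e) := by ring
      rw [step, show 2*(1/θ-1)*(l+d/2) = (1/θ-1)*(2*(l+d/2)) by ring]
      apply mul_le_mul_of_nonneg_left _ hu.le
      -- l(1/θ+1) + e ≤ 2(l + d/2)
      have h4 : l*(1/θ+1) = l*(1/θ-1) + 2*l := by ring
      rw [he] at hls ⊢
      linarith
    have hev1 : ∀ᶠ n in atTop, ENNReal.ofReal (l - γ) ≤ Gg μ (ε n) := by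
      rcases le_or_gt (l - γ) 0 with h | h
      · filter_upwards with n
        rw [ENNReal.ofReal_eq_zero.2 h]
        exact zero_le
      · have := hGε.eventually (eventually_gt_nhds (show ENNReal.ofReal (l-γ) < Ll μ by
          rw [hLl]; exact (ENNReal.ofReal_lt_ofReal_iff (by linarith)).2 (by linarith)))
        filter_upwards [this] with n hn using hn.le
    have hGθ := G_tendsto μ (fun n => ε n / θ) (fun n => div_pos (hε n) hθ0)
      (by simpa using h0.div_const θ)
    have hev2 : ∀ᶠ n in atTop, Gg μ (ε n / θ) ≤ ENNReal.ofReal (l + γ) := by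
      have := hGθ.eventually (eventually_lt_nhds (show Ll μ < ENNReal.ofReal (l+γ) by
        rw [hLl]; exact (ENNReal.ofReal_lt_ofReal_iff (by linarith)).2 (by linarith)))
      filter_upwards [this] with n hn using hn.le
    have hevQ : ∀ᶠ n in atTop, Qq μ (ε n) ≤ ENNReal.ofReal (l + d/2) := by
      filter_upwards [hev1, hev2] with n h1 h2
      have step := hIB μ (hε n) hθ0 hθ1
      have c1 : ENNReal.ofReal (2*(1/θ-1)) * Qq μ (ε n) + ENNReal.ofReal (l - γ)
          ≤ ENNReal.ofReal ((l+γ)*(1/θ^2)) := by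
        calc ENNReal.ofReal (2*(1/θ-1)) * Qq μ (ε n) + ENNReal.ofReal (l - γ)
            ≤ ENNReal.ofReal (2*(1/θ-1)) * Qq μ (ε n) + Gg μ (ε n) := add_le_add_right h1 _
          _ ≤ ENNReal.ofReal (1/θ^2) * Gg μ (ε n / θ) := step
          _ ≤ ENNReal.ofReal (1/θ^2) * ENNReal.ofReal (l+γ) := mul_le_mul_right h2 _
          _ = ENNReal.ofReal ((l+γ)*(1/θ^2)) := by
              rw [← ENNReal.ofReal_mul (by positivity), mul_comm]
      have c2 : ENNReal.ofReal (2*(1/θ-1)) * Qq μ (ε n)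
          ≤ ENNReal.ofReal ((l+γ)*(1/θ^2) - (l-γ)) := by
        have c3 := le_trans c1 (ofReal_sub_add ((l+γ)*(1/θ^2)) (l-γ))
        exact (ENNReal.add_le_add_iff_right ENNReal.ofReal_ne_top).1 c3
      have c4 : ENNReal.ofReal (2*(1/θ-1)) * Qq μ (ε n)
          ≤ ENNReal.ofReal (2*(1/θ-1)) * ENNReal.ofReal (l + d/2) := by
        apply le_trans c2
        rw [← ENNReal.ofReal_mul (by nlinarith)]
        exact ENNReal.ofReal_le_ofReal (by linarith [hreal])
      rwa [ENNReal.mul_le_mul_iff_right (ENNReal.ofReal_pos.2 (by nlinarith)).ne'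
        ENNReal.ofReal_ne_top] at c4
    calc limsup (fun n => Qq μ (ε n)) atTop ≤ ENNReal.ofReal (l + d/2) :=
          limsup_le_of_le (by isBoundedDefault) hevQ
      _ ≤ Ll μ + δ := by
          rw [ENNReal.ofReal_add hl0 (by positivity), hLl]
          apply add_le_add_right
          have hcoe : ENNReal.ofReal ((δ:ℝ)) = (δ : ℝ≥0∞) := ENNReal.ofReal_coe_nnreal
          rw [← hcoe]
          exact ENNReal.ofReal_le_ofReal (by rw [hd] at hd0 ⊢; linarith)
  · isBoundedDefault
  · isBoundedDefault

end



instance : (nhdsWithin (0:ℝ) (Set.Ioi 0)).IsCountablyGenerated := by infer_instance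

theorem stmt12 (μ : Measure ℝ) [IsFiniteMeasure μ] (hμ : μ ≠ 0) :
    Tendsto
      (fun ε : ℝ =>
        (ENNReal.ofReal (2 * ε))⁻¹ * ∫⁻ τ, μ (Set.Ioo (τ - ε) (τ + ε)) ∂μ)
      (nhdsWithin 0 (Set.Ioi 0))
      (nhds (∫⁻ x : ℝ,
        (‖∫ l, Complex.exp (-(2 * π * x * l : ℝ) * Complex.I) ∂μ‖₊ : ℝ≥0∞) ^ 2)) := by
  have hfun : (fun ε : ℝ =>
      (ENNReal.ofReal (2 * ε))⁻¹ * ∫⁻ τ, μ (Set.Ioo (τ - ε) (τ + ε)) ∂μ) = fun ε => Qq μ ε := by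
    funext ε
    rw [stmt_eq μ ε, Qq]
  rw [hfun]
  have hL : (∫⁻ x : ℝ, (‖∫ l, Complex.exp (-(2 * π * x * l : ℝ) * Complex.I) ∂μ‖₊ : ℝ≥0∞) ^ 2)
      = Ll μ := rfl
  rw [hL]
  rw [Filter.tendsto_iff_seq_tendsto]
  intro v hv
  rw [tendsto_nhdsWithin_iff] at hv
  obtain ⟨hv0, hvm⟩ := hv
  set v' : ℕ → ℝ := fun n => if 0 < v n then v n else 1 with hv'def
  have hv'pos : ∀ n, 0 < v' n := by
    intro n
    rw [hv'def]
    dsimp only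
    split
    · assumption
    · norm_num
  have heq : ∀ᶠ n in atTop, v n = v' n := by
    filter_upwards [hvm] with n hn
    rw [Set.mem_Ioi] at hn
    rw [hv'def]
    dsimp only
    rw [if_pos hn]
  have hv'0 : Tendsto v' atTop (𝓝 0) := hv0.congr' heq
  have hmain := main_seq μ v' hv'pos hv'0
  apply hmain.congr'
  filter_upwards [heq] with n hn
  rw [Function.comp_apply, hn]
end

section
/- Central-limit-type bound for characteristic functions: let g ∈ L¹(ℝ) be a probability density with ∫|λ|^k g(λ)dλ < ∞ for k = 1,2,3, and suppose ∫_ℝ |F[g](x)|^ν dx < ∞ for some ν ≥ 1. Then there exists C > 0 such that for all integers m ≥ ν, ∫_ℝ |F[g](x)|^m dx < C/√m. -/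
open MeasureTheory Real Filter
open scoped Real FourierTransform ENNReal NNReal Topology

-- Jordan-type inequality
lemma jordan_cos {t : ℝ} (ht : |t| ≤ π) : 2 / π ^ 2 * t ^ 2 ≤ 1 - Real.cos t := by
  have hπ : 0 < π := Real.pi_pos
  wlog h : 0 ≤ t generalizing t
  · have := this (t := -t) (by rwa [abs_neg]) (by linarith [le_of_not_ge h])
    simpa using this
  have h2 : Real.sin (t / 2) ^ 2 = 1 / 2 - Real.cos t / 2 := by
    have h3 := Real.cos_sq (t / 2)
    rw [show 2 * (t / 2) = t by ring] at h3
    have := Real.sin_sq_add_cos_sq (t / 2)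
    nlinarith
  have hs : 2 / π * (t / 2) ≤ Real.sin (t / 2) := by
    apply Real.mul_le_sin (by linarith)
    rw [abs_of_nonneg h] at ht; linarith
  have hge : 0 ≤ 2 / π * (t / 2) := by positivity
  have hkey : (2 / π * (t / 2)) ^ 2 ≤ Real.sin (t / 2) ^ 2 :=
    pow_le_pow_left₀ hge hs 2
  have hid : (2 / π * (t / 2)) ^ 2 = t ^ 2 / π ^ 2 := by
    field_simp
  rw [hid] at hkey
  have : 2 / π ^ 2 * t ^ 2 = 2 * (t ^ 2 / π ^ 2) := by ring
  linarith

lemma rpow_le_of_le_one {t : ℝ} (h0 : 0 ≤ t) (h1 : t ≤ 1) {p q : ℝ} (hp : 0 < p)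
    (hpq : p ≤ q) : t ^ q ≤ t ^ p :=
  Real.rpow_le_rpow_of_exponent_ge' h0 h1 hp.le hpq

section Mu

variable {μ : Measure ℝ} [IsProbabilityMeasure μ]

noncomputable def psi (μ : Measure ℝ) (x : ℝ) : ℂ :=
  ∫ l, Complex.exp (-(2 * π * x * l : ℝ) * Complex.I) ∂μ

lemma integrable_char (θ : ℝ) :
    Integrable (fun l : ℝ => Complex.exp (-(θ * l : ℝ) * Complex.I)) μ := by
  apply (integrable_const (1 : ℝ)).mono'
  · exact ((Complex.continuous_exp.comp
      ((Complex.continuous_ofReal.comp (by continuity)).neg.mul continuous_const))).aestronglyMeasurable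
  · refine Filter.Eventually.of_forall fun l => ?_
    rw [neg_mul]
    simp [Complex.norm_exp]

lemma integrable_char_prod (x : ℝ) :
    Integrable (fun p : ℝ × ℝ =>
      Complex.exp ((-(2 * π * x * (p.1 - p.2)) : ℝ) * Complex.I)) (μ.prod μ) := by
  apply (integrable_const (1 : ℝ)).mono'
  · exact ((Complex.continuous_exp.comp
      ((Complex.continuous_ofReal.comp (by continuity)).mul continuous_const))).aestronglyMeasurable
  · refine Filter.Eventually.of_forall fun l => ?_
    simp [Complex.norm_exp]

lemma psi_normsq (x : ℝ) :
    ‖psi μ x‖ ^ 2 = ∫ p : ℝ × ℝ, Real.cos (2 * π * x * (p.1 - p.2)) ∂(μ.prod μ) := by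
  have hconj : (starRingEnd ℂ) (psi μ x)
      = ∫ l, Complex.exp ((2 * π * x * l : ℝ) * Complex.I) ∂μ := by
    rw [psi, ← integral_conj]
    congr 1; funext l
    rw [← Complex.exp_conj, map_mul, map_neg, Complex.conj_I, Complex.conj_ofReal]
    ring_nf
  have hprod : psi μ x * (starRingEnd ℂ) (psi μ x)
      = ∫ p : ℝ × ℝ, Complex.exp ((-(2 * π * x * (p.1 - p.2)) : ℝ) * Complex.I) ∂(μ.prod μ) := by
    rw [hconj, psi, ← integral_prod_mul]
    congr 1; funext p
    rw [← Complex.exp_add]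
    congr 1
    push_cast
    ring
  have h1 : ‖psi μ x‖ ^ 2 = (psi μ x * (starRingEnd ℂ) (psi μ x)).re := by
    rw [Complex.mul_conj, Complex.ofReal_re, Complex.normSq_eq_norm_sq]
  have h2 := ContinuousLinearMap.integral_comp_comm Complex.reCLM (integrable_char_prod (μ := μ) x)
  simp only [Complex.reCLM_apply] at h2
  rw [h1, hprod, ← h2]
  congr 1; funext p
  rw [Complex.exp_ofReal_mul_I_re, Real.cos_neg]

lemma cos_integrable (x : ℝ) :
    Integrable (fun p : ℝ × ℝ => Real.cos (2 * π * x * (p.1 - p.2))) (μ.prod μ) := by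
  apply (integrable_const (1 : ℝ)).mono'
  · exact (Real.continuous_cos.comp (by continuity)).aestronglyMeasurable
  · exact Filter.Eventually.of_forall fun l => by
      simpa using Real.abs_cos_le_one _

lemma psi_one_sub (x : ℝ) :
    1 - ‖psi μ x‖ ^ 2
      = ∫ p : ℝ × ℝ, (1 - Real.cos (2 * π * x * (p.1 - p.2))) ∂(μ.prod μ) := by
  rw [integral_sub (integrable_const 1) (cos_integrable x), integral_const, ← psi_normsq]
  simp

lemma psi_le_one (x : ℝ) : ‖psi μ x‖ ≤ 1 := by
  rw [psi]
  refine le_trans (norm_integral_le_integral_norm _) (le_of_eq ?_)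
  have h1 : (fun l : ℝ => ‖Complex.exp (-(2 * π * x * l : ℝ) * Complex.I)‖)
      = fun _ : ℝ => (1 : ℝ) := by
    funext l; rw [neg_mul]; simp [Complex.norm_exp]
  rw [h1, integral_const]
  simp

lemma line_null (hμ : ∀ c : ℝ, μ {c} = 0) (r : ℝ) :
    (μ.prod μ) {p : ℝ × ℝ | p.1 - p.2 = r} = 0 := by
  have hm : MeasurableSet {p : ℝ × ℝ | p.1 - p.2 = r} :=
    measurableSet_eq_fun (by fun_prop) measurable_const
  rw [Measure.prod_apply hm]
  have h0 : ∀ l : ℝ, μ {y : ℝ | l - y = r} = 0 := by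
    intro l
    have : {y : ℝ | l - y = r} = {l - r} := by
      ext y
      simp only [Set.mem_setOf_eq, Set.mem_singleton_iff]
      constructor <;> intro hh <;> linarith
    rw [this]; exact hμ _
  have : ∀ l : ℝ, μ (Prod.mk l ⁻¹' {p : ℝ × ℝ | p.1 - p.2 = r}) = 0 := fun l => h0 l
  simp only [this]
  simp

lemma psi_lt_one (hμ : ∀ c : ℝ, μ {c} = 0) {x : ℝ} (hx : x ≠ 0) : ‖psi μ x‖ < 1 := by
  rcases lt_or_ge ‖psi μ x‖ 1 with h | h
  · exact h
  exfalso
  have heq : ‖psi μ x‖ = 1 := le_antisymm (psi_le_one x) h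
  have h0 : (1 : ℝ) - ‖psi μ x‖ ^ 2 = 0 := by rw [heq]; ring
  rw [psi_one_sub] at h0
  have hnn : (0 : ℝ × ℝ → ℝ) ≤ᵐ[μ.prod μ]
      fun p => 1 - Real.cos (2 * π * x * (p.1 - p.2)) :=
    Filter.Eventually.of_forall fun p => by
      simp [sub_nonneg, Real.cos_le_one]
  have hInt : Integrable (fun p : ℝ × ℝ => 1 - Real.cos (2 * π * x * (p.1 - p.2))) (μ.prod μ) :=
    (integrable_const 1).sub (cos_integrable x)
  have hae := (integral_eq_zero_iff_of_nonneg_ae hnn hInt).mp h0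
  rw [Filter.EventuallyEq, ae_iff] at hae
  have hsub : Set.univ ⊆ {p : ℝ × ℝ | ¬(1 - Real.cos (2 * π * x * (p.1 - p.2)) = (0 : ℝ × ℝ → ℝ) p)}
      ∪ ⋃ k : ℤ, {p : ℝ × ℝ | p.1 - p.2 = k / x} := by
    intro p _
    by_cases hp : 1 - Real.cos (2 * π * x * (p.1 - p.2)) = 0
    · right
      have : Real.cos (2 * π * x * (p.1 - p.2)) = 1 := by linarith
      obtain ⟨n, hn⟩ := (Real.cos_eq_one_iff _).mp this
      refine Set.mem_iUnion.mpr ⟨n, ?_⟩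
      have hπ : (0:ℝ) < π := Real.pi_pos
      show p.1 - p.2 = n / x
      field_simp
      nlinarith [hn]
    · left; exact hp
  have hnull : (μ.prod μ) ({p : ℝ × ℝ | ¬(1 - Real.cos (2 * π * x * (p.1 - p.2)) = (0 : ℝ × ℝ → ℝ) p)}
      ∪ ⋃ k : ℤ, {p : ℝ × ℝ | p.1 - p.2 = k / x}) = 0 := by
    apply measure_union_null hae
    exact measure_iUnion_null fun k => line_null hμ _
  have : (μ.prod μ) Set.univ = 0 := measure_mono_null hsub hnull
  simpa using this

lemma exists_ab (hμ : ∀ c : ℝ, μ {c} = 0) :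
    ∃ a : ℝ, 0 < a ∧ ∃ b : ℝ, a ≤ b ∧
      0 < ((μ.prod μ) {p : ℝ × ℝ | a ≤ |p.1 - p.2| ∧ |p.1 - p.2| ≤ b}).toReal := by
  by_contra hcon
  push_neg at hcon
  have hall : ∀ n : ℕ,
      (μ.prod μ) {p : ℝ × ℝ | 1 / (n + 1 : ℝ) ≤ |p.1 - p.2| ∧ |p.1 - p.2| ≤ (n + 1 : ℝ)} = 0 := by
    intro n
    have ha : (0:ℝ) < 1 / (n + 1 : ℝ) := by positivity
    have hb : (1 : ℝ) / (n + 1 : ℝ) ≤ (n + 1 : ℝ) := by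
      rw [div_le_iff₀ (by positivity)]
      nlinarith [Nat.cast_nonneg (α := ℝ) n]
    have := hcon _ ha _ hb
    have hfin : (μ.prod μ) {p : ℝ × ℝ | 1 / (n + 1 : ℝ) ≤ |p.1 - p.2| ∧ |p.1 - p.2| ≤ (n + 1 : ℝ)} ≠ ⊤ :=
      measure_ne_top _ _
    rcases eq_or_ne ((μ.prod μ) {p : ℝ × ℝ | 1 / (n + 1 : ℝ) ≤ |p.1 - p.2| ∧ |p.1 - p.2| ≤ (n + 1 : ℝ)}) 0 with h | h
    · exact h
    · exact absurd (ENNReal.toReal_pos h hfin) (not_lt.mpr this)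
  have hsub : Set.univ ⊆ {p : ℝ × ℝ | p.1 - p.2 = 0}
      ∪ ⋃ n : ℕ, {p : ℝ × ℝ | 1 / (n + 1 : ℝ) ≤ |p.1 - p.2| ∧ |p.1 - p.2| ≤ (n + 1 : ℝ)} := by
    intro p _
    by_cases hp : p.1 - p.2 = 0
    · left; exact hp
    · right
      have hd : 0 < |p.1 - p.2| := abs_pos.mpr hp
      obtain ⟨n, hn⟩ := exists_nat_ge (max (1 / |p.1 - p.2|) |p.1 - p.2|)
      refine Set.mem_iUnion.mpr ⟨n, ?_, ?_⟩
      · rw [div_le_iff₀ (by positivity)]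
        have h1 : 1 / |p.1 - p.2| ≤ (n : ℝ) := le_trans (le_max_left _ _) hn
        rw [div_le_iff₀ hd] at h1
        nlinarith
      · have := le_trans (le_max_right _ _) hn
        linarith
  have : (μ.prod μ) Set.univ = 0 := by
    apply measure_mono_null hsub
    exact measure_union_null (line_null hμ 0) (measure_iUnion_null hall)
  simpa using this

lemma psi_gauss (hμ : ∀ c : ℝ, μ {c} = 0) :
    ∃ c : ℝ, 0 < c ∧ ∃ δ : ℝ, 0 < δ ∧ ∀ x : ℝ, |x| ≤ δ →
      ‖psi μ x‖ ≤ Real.exp (-(c * x ^ 2)) := by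
  obtain ⟨a, ha, b, hab, hp⟩ := exists_ab hμ
  set T : Set (ℝ × ℝ) := {p : ℝ × ℝ | a ≤ |p.1 - p.2| ∧ |p.1 - p.2| ≤ b} with hT
  have hb : 0 < b := lt_of_lt_of_le ha hab
  set P : ℝ := ((μ.prod μ) T).toReal with hPdef
  have hmd : Measurable fun p : ℝ × ℝ => |p.1 - p.2| :=
    (continuous_abs.comp (continuous_fst.sub continuous_snd)).measurable
  have hTm : MeasurableSet T := by
    apply MeasurableSet.inter
    · exact measurableSet_le measurable_const hmd
    · exact measurableSet_le hmd measurable_const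
  refine ⟨4 * a ^ 2 * P, by positivity, 1 / (2 * b), by positivity, fun x hx => ?_⟩
  have hπ : (0:ℝ) < π := Real.pi_pos
  -- pointwise bound on T
  have hpt : ∀ p : ℝ × ℝ, p ∈ T →
      8 * a ^ 2 * P * x ^ 2 / P ≤ 1 - Real.cos (2 * π * x * (p.1 - p.2)) := by
    intro p hpT
    obtain ⟨h1, h2⟩ := hpT
    have habs : |2 * π * x * (p.1 - p.2)| ≤ π := by
      rw [abs_mul, abs_mul, abs_mul]
      have : |(2:ℝ)| = 2 := by norm_num
      rw [this, abs_of_pos hπ]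
      calc 2 * π * |x| * |p.1 - p.2| ≤ 2 * π * (1 / (2 * b)) * b := by
            apply mul_le_mul (by nlinarith [abs_nonneg x]) h2 (abs_nonneg _) (by positivity)
        _ = π := by field_simp
    have hj := jordan_cos habs
    have hd2 : a ^ 2 ≤ (p.1 - p.2) ^ 2 := by
      rw [← sq_abs (p.1 - p.2)]
      nlinarith [abs_nonneg (p.1 - p.2)]
    have : 8 * x ^ 2 * a ^ 2 ≤ 2 / π ^ 2 * (2 * π * x * (p.1 - p.2)) ^ 2 := by
      have hexp : 2 / π ^ 2 * (2 * π * x * (p.1 - p.2)) ^ 2 = 8 * x ^ 2 * (p.1 - p.2) ^ 2 := by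
        field_simp; ring
      rw [hexp]
      nlinarith [sq_nonneg x]
    have hPq : 8 * a ^ 2 * P * x ^ 2 / P = 8 * x ^ 2 * a ^ 2 := by
      field_simp [ne_of_gt hp]
    rw [hPq]
    linarith
  -- integral bound
  have hInt : Integrable (fun p : ℝ × ℝ => 1 - Real.cos (2 * π * x * (p.1 - p.2))) (μ.prod μ) :=
    (integrable_const 1).sub (cos_integrable x)
  have hstep1 : ∫ p in T, (8 * a ^ 2 * P * x ^ 2 / P) ∂(μ.prod μ)
      ≤ ∫ p in T, (1 - Real.cos (2 * π * x * (p.1 - p.2))) ∂(μ.prod μ) :=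
    setIntegral_mono_on (integrableOn_const (measure_ne_top _ _))
      hInt.integrableOn hTm hpt
  have hstep2 : ∫ p in T, (1 - Real.cos (2 * π * x * (p.1 - p.2))) ∂(μ.prod μ)
      ≤ ∫ p, (1 - Real.cos (2 * π * x * (p.1 - p.2))) ∂(μ.prod μ) :=
    setIntegral_le_integral hInt (Filter.Eventually.of_forall fun p => by
      simp [sub_nonneg, Real.cos_le_one])
  have hconst : ∫ p in T, (8 * a ^ 2 * P * x ^ 2 / P) ∂(μ.prod μ)
      = 8 * a ^ 2 * P * x ^ 2 := by
    rw [setIntegral_const, smul_eq_mul, measureReal_def, ← hPdef]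
    field_simp [ne_of_gt hp]
  have hmain : 8 * a ^ 2 * P * x ^ 2 ≤ 1 - ‖psi μ x‖ ^ 2 := by
    rw [psi_one_sub]
    rw [hconst] at hstep1
    linarith
  have h1 : ‖psi μ x‖ ^ 2 ≤ Real.exp (-(8 * a ^ 2 * P * x ^ 2)) := by
    have := Real.add_one_le_exp (-(8 * a ^ 2 * P * x ^ 2))
    linarith
  calc ‖psi μ x‖ = Real.sqrt (‖psi μ x‖ ^ 2) := by rw [Real.sqrt_sq (norm_nonneg _)]
    _ ≤ Real.sqrt (Real.exp (-(8 * a ^ 2 * P * x ^ 2))) := Real.sqrt_le_sqrt h1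
    _ = Real.exp (-(4 * a ^ 2 * P * x ^ 2)) := by
        rw [← Real.exp_half]
        congr 1
        ring

end Mu

theorem stmt15 (g : ℝ → ℝ) (hg : Integrable g) (hpos : ∀ x, 0 ≤ g x)
    (hone : ∫ x, g x = 1)
    (hmom : ∀ k : ℕ, 1 ≤ k → k ≤ 3 → Integrable fun l => |l| ^ k * g l)
    (ν : ℝ) (hν : 1 ≤ ν)
    (hint : Integrable fun x : ℝ =>
      ‖∫ l, Complex.exp (-(2 * π * x * l : ℝ) * Complex.I) * (g l : ℂ)‖ ^ ν) :
    ∃ C > 0, ∀ m : ℕ, ν ≤ (m : ℝ) →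
      ∫ x : ℝ, ‖∫ l, Complex.exp (-(2 * π * x * l : ℝ) * Complex.I) * (g l : ℂ)‖ ^ m
        < C / Real.sqrt m := by
  classical
  set fc : ℝ → ℂ := fun l => (g l : ℂ) with hfcdef
  have hfc : Integrable fc := hg.ofReal
  set φ : ℝ → ℂ := fun x => ∫ l, Complex.exp (-(2 * π * x * l : ℝ) * Complex.I) * (g l : ℂ)
    with hφdef
  have hint' : Integrable fun x : ℝ => ‖φ x‖ ^ ν := hint
  show ∃ C > 0, ∀ m : ℕ, ν ≤ (m : ℝ) → ∫ x : ℝ, ‖φ x‖ ^ m < C / Real.sqrt m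
  have hφF : φ = 𝓕 fc := by
    funext x
    show (∫ l, Complex.exp (-(2 * π * x * l : ℝ) * Complex.I) * (g l : ℂ)) = 𝓕 fc x
    rw [Real.fourier_real_eq_integral_exp_smul]
    refine integral_congr_ae (Filter.Eventually.of_forall fun l => ?_)
    show Complex.exp (-(2 * π * x * l : ℝ) * Complex.I) * (g l : ℂ)
      = Complex.exp (((-2 * π * l * x : ℝ) : ℂ) * Complex.I) • fc l
    rw [smul_eq_mul,
      show ((-2 * π * l * x : ℝ) : ℂ) = -((2 * π * x * l : ℝ) : ℂ) by push_cast; ring]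
  have hcont : Continuous φ := by
    rw [hφF]
    exact VectorFourier.fourierIntegral_continuous Real.continuous_fourierChar
      (by exact continuous_inner) hfc
  have hRL : Tendsto (fun x => ‖φ x‖) (cocompact ℝ) (𝓝 0) := by
    rw [hφF]
    simpa using (Real.zero_at_infty_fourier fc).norm
  -- the probability measure with density g
  set μ : Measure ℝ := volume.withDensity (fun l => ((g l).toNNReal : ℝ≥0∞)) with hμdef
  have hgnn : AEMeasurable (fun l => (g l).toNNReal) volume := hg.aemeasurable.real_toNNReal
  have hμuniv : μ Set.univ = 1 := by
    rw [hμdef, withDensity_apply _ MeasurableSet.univ, setLIntegral_univ]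
    have h2 : ∫⁻ l, ((g l).toNNReal : ℝ≥0∞) = ENNReal.ofReal (∫ l, g l) := by
      rw [ofReal_integral_eq_lintegral_ofReal hg (Filter.Eventually.of_forall hpos)]
      rfl
    rw [h2, hone]
    simp
  haveI : IsProbabilityMeasure μ := ⟨hμuniv⟩
  have hμa : ∀ c : ℝ, μ {c} = 0 := by
    intro c
    rw [hμdef, withDensity_apply _ (measurableSet_singleton c)]
    exact setLIntegral_measure_zero _ _ (measure_singleton c)
  have hφψ : ∀ x, φ x = psi μ x := by
    intro x
    show (∫ l, Complex.exp (-(2 * π * x * l : ℝ) * Complex.I) * (g l : ℂ)) = psi μ x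
    rw [psi, hμdef, integral_withDensity_eq_integral_smul₀ hgnn]
    refine integral_congr_ae (Filter.Eventually.of_forall fun l => ?_)
    show Complex.exp (-(2 * π * x * l : ℝ) * Complex.I) * (g l : ℂ)
      = (g l).toNNReal • Complex.exp (-(2 * π * x * l : ℝ) * Complex.I)
    rw [NNReal.smul_def, Real.coe_toNNReal _ (hpos l), Complex.real_smul, mul_comm]
  obtain ⟨c, hc, δ, hδ, hgauss⟩ := psi_gauss (μ := μ) hμa
  have hgaussφ : ∀ x : ℝ, |x| ≤ δ → ‖φ x‖ ≤ Real.exp (-(c * x ^ 2)) := fun x hx =>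
    (hφψ x) ▸ hgauss x hx
  have hlt : ∀ x : ℝ, x ≠ 0 → ‖φ x‖ < 1 := fun x hx => (hφψ x) ▸ psi_lt_one hμa hx
  have hle1 : ∀ x : ℝ, ‖φ x‖ ≤ 1 := fun x => (hφψ x) ▸ psi_le_one x
  -- tail bound ρ < 1
  have hev : ∀ᶠ x : ℝ in cocompact ℝ, ‖φ x‖ < 1 / 2 :=
    hRL.eventually (gt_mem_nhds (by norm_num))
  obtain ⟨K, hK, hKsub⟩ := Filter.mem_cocompact.mp hev
  obtain ⟨R, hR⟩ := hK.isBounded.subset_closedBall 0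
  set R₁ : ℝ := max R δ with hR₁
  set K₂ : Set ℝ := Set.Icc (-R₁) R₁ ∩ {x : ℝ | δ ≤ |x|} with hK₂
  have hδR₁ : δ ≤ R₁ := le_max_right R δ
  have hδK₂ : δ ∈ K₂ := by
    refine ⟨⟨?_, hδR₁⟩, ?_⟩
    · have : 0 < R₁ := lt_of_lt_of_le hδ hδR₁
      linarith
    · simp only [Set.mem_setOf_eq, abs_of_pos hδ, le_refl]
  have hK₂c : IsCompact K₂ :=
    isCompact_Icc.inter_right (isClosed_le continuous_const continuous_abs)
  obtain ⟨x₀, hx₀K, hx₀max⟩ := hK₂c.exists_isMaxOn ⟨δ, hδK₂⟩ hcont.norm.continuousOn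
  have hx₀ne : x₀ ≠ 0 := by
    intro h0
    have h1 : δ ≤ |x₀| := hx₀K.2
    rw [h0] at h1
    simp at h1
    linarith
  set ρ : ℝ := max ‖φ x₀‖ (1 / 2) with hρdef
  have hρ1 : ρ < 1 := max_lt (hlt x₀ hx₀ne) (by norm_num)
  have hρpos : (0 : ℝ) < ρ := lt_of_lt_of_le (by norm_num) (le_max_right _ _)
  have hρtail : ∀ x : ℝ, δ < |x| → ‖φ x‖ ≤ ρ := by
    intro x hx
    by_cases hxR : |x| ≤ R₁
    · have hxK₂ : x ∈ K₂ := ⟨abs_le.mp hxR, hx.le⟩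
      exact le_trans (hx₀max hxK₂) (le_max_left _ _)
    · have hxK : x ∈ Kᶜ := by
        intro hxK
        have h2 := hR hxK
        rw [Metric.mem_closedBall, dist_zero_right, Real.norm_eq_abs] at h2
        exact hxR (le_trans h2 (le_max_left R δ))
      exact le_trans (hKsub hxK).le (le_max_right _ _)
  -- constants
  set m₀ : ℕ := ⌈ν⌉₊ with hm₀def
  have hνm₀ : ν ≤ (m₀ : ℝ) := Nat.le_ceil ν
  set A : ℝ := ∫ x : ℝ, ‖φ x‖ ^ ν with hAdef
  have hA0 : 0 ≤ A := integral_nonneg fun x => Real.rpow_nonneg (norm_nonneg _) ν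
  obtain ⟨B₀, hB₀⟩ := (tendsto_self_mul_const_pow_of_lt_one hρpos.le hρ1).bddAbove_range
  have hB₀' : ∀ n : ℕ, (n : ℝ) * ρ ^ n ≤ B₀ := fun n => hB₀ (Set.mem_range_self n)
  have hB₀0 : 0 ≤ B₀ := le_trans (by norm_num) (hB₀' 0)
  have hterm : 0 ≤ B₀ * A / ρ ^ m₀ := by positivity
  refine ⟨Real.sqrt (π / c) + B₀ * A / ρ ^ m₀ + 1, by positivity, ?_⟩
  intro m hm
  have hm1 : (1 : ℝ) ≤ (m : ℝ) := hν.trans hm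
  have hmpos : (0 : ℝ) < (m : ℝ) := lt_of_lt_of_le one_pos hm1
  have hsq : 0 < Real.sqrt m := Real.sqrt_pos.mpr hmpos
  have hm₀m : m₀ ≤ m := Nat.ceil_le.mpr hm
  have hνpos : (0 : ℝ) < ν := lt_of_lt_of_le one_pos hν
  have hpow_le : ∀ x : ℝ, ‖φ x‖ ^ m ≤ ‖φ x‖ ^ ν := by
    intro x
    rw [← Real.rpow_natCast (‖φ x‖) m]
    exact rpow_le_of_le_one (norm_nonneg _) (hle1 x) hνpos hm
  have hIm : Integrable (fun x : ℝ => ‖φ x‖ ^ m) := by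
    apply hint'.mono' (hcont.norm.pow m).aestronglyMeasurable
    refine Filter.Eventually.of_forall fun x => ?_
    show ‖‖φ x‖ ^ m‖ ≤ ‖φ x‖ ^ ν
    rw [Real.norm_eq_abs, abs_of_nonneg (pow_nonneg (norm_nonneg _) m)]
    exact hpow_le x
  set s : Set ℝ := {x : ℝ | |x| ≤ δ} with hsdef
  have hsm : MeasurableSet s := measurableSet_le continuous_abs.measurable measurable_const
  have hsplit : ∫ x : ℝ, ‖φ x‖ ^ m
      = (∫ x in s, ‖φ x‖ ^ m) + ∫ x in sᶜ, ‖φ x‖ ^ m := (integral_add_compl hsm hIm).symm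
  have hcm : 0 < c * (m : ℝ) := mul_pos hc hmpos
  have hg1 : ∫ x in s, ‖φ x‖ ^ m ≤ ∫ x in s, Real.exp (-(c * m) * x ^ 2) := by
    apply setIntegral_mono_on hIm.integrableOn (integrable_exp_neg_mul_sq hcm).integrableOn hsm
    intro x hx
    calc ‖φ x‖ ^ m ≤ (Real.exp (-(c * x ^ 2))) ^ m :=
          pow_le_pow_left₀ (norm_nonneg _) (hgaussφ x hx) m
      _ = Real.exp (-(c * m) * x ^ 2) := by
          rw [← Real.exp_nat_mul]
          congr 1
          ring
  have hg2 : ∫ x in s, Real.exp (-(c * m) * x ^ 2) ≤ ∫ x : ℝ, Real.exp (-(c * m) * x ^ 2) :=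
    setIntegral_le_integral (integrable_exp_neg_mul_sq hcm)
      (Filter.Eventually.of_forall fun x => (Real.exp_pos _).le)
  have hg3 : ∫ x : ℝ, Real.exp (-(c * m) * x ^ 2) = Real.sqrt (π / c) / Real.sqrt m := by
    rw [integral_gaussian, ← div_div, Real.sqrt_div (by positivity : (0:ℝ) ≤ π / c)]
  have htail1 : ∫ x in sᶜ, ‖φ x‖ ^ m ≤ ∫ x in sᶜ, ρ ^ (m - m₀) * ‖φ x‖ ^ ν := by
    apply setIntegral_mono_on hIm.integrableOn (hint'.const_mul _).integrableOn hsm.compl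
    intro x hx
    have hxδ : δ < |x| := by
      have : ¬ |x| ≤ δ := hx
      linarith [lt_of_not_ge this]
    have hxρ : ‖φ x‖ ≤ ρ := hρtail x hxδ
    rw [(pow_sub_mul_pow (‖φ x‖) hm₀m).symm]
    apply mul_le_mul (pow_le_pow_left₀ (norm_nonneg _) hxρ _) ?_
      (pow_nonneg (norm_nonneg _) _) (pow_nonneg hρpos.le _)
    rw [← Real.rpow_natCast (‖φ x‖) m₀]
    exact rpow_le_of_le_one (norm_nonneg _) (hle1 x) hνpos hνm₀
  have htail2 : ∫ x in sᶜ, ρ ^ (m - m₀) * ‖φ x‖ ^ ν ≤ ρ ^ (m - m₀) * A := by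
    calc ∫ x in sᶜ, ρ ^ (m - m₀) * ‖φ x‖ ^ ν ≤ ∫ x : ℝ, ρ ^ (m - m₀) * ‖φ x‖ ^ ν :=
        setIntegral_le_integral (hint'.const_mul _)
          (Filter.Eventually.of_forall fun x => by positivity)
      _ = ρ ^ (m - m₀) * A := by rw [hAdef, MeasureTheory.integral_const_mul]
  have hρbound : ρ ^ (m - m₀) ≤ B₀ / (ρ ^ m₀ * Real.sqrt m) := by
    have hsqm : Real.sqrt m ≤ (m : ℝ) := by
      nlinarith [Real.sq_sqrt hmpos.le, Real.sqrt_nonneg ((m : ℝ))]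
    have h1 : Real.sqrt m * ρ ^ m ≤ B₀ :=
      le_trans (mul_le_mul_of_nonneg_right hsqm (pow_nonneg hρpos.le m)) (hB₀' m)
    rw [le_div_iff₀ (by positivity : (0:ℝ) < ρ ^ m₀ * Real.sqrt m)]
    calc ρ ^ (m - m₀) * (ρ ^ m₀ * Real.sqrt m)
        = (ρ ^ (m - m₀) * ρ ^ m₀) * Real.sqrt m := by ring
      _ = Real.sqrt m * ρ ^ m := by rw [pow_sub_mul_pow _ hm₀m]; ring
      _ ≤ B₀ := h1
  have ht2 : ∫ x in sᶜ, ‖φ x‖ ^ m ≤ B₀ * A / (ρ ^ m₀ * Real.sqrt m) := by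
    calc ∫ x in sᶜ, ‖φ x‖ ^ m ≤ ρ ^ (m - m₀) * A := le_trans htail1 htail2
      _ ≤ B₀ / (ρ ^ m₀ * Real.sqrt m) * A := mul_le_mul_of_nonneg_right hρbound hA0
      _ = B₀ * A / (ρ ^ m₀ * Real.sqrt m) := by ring
  have hdivEq : B₀ * A / ρ ^ m₀ / Real.sqrt m = B₀ * A / (ρ ^ m₀ * Real.sqrt m) := div_div _ _ _
  have hfin : ∫ x : ℝ, ‖φ x‖ ^ m ≤ (Real.sqrt (π / c) + B₀ * A / ρ ^ m₀) / Real.sqrt m := by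
    rw [hsplit, add_div]
    have t1 : ∫ x in s, ‖φ x‖ ^ m ≤ Real.sqrt (π / c) / Real.sqrt m := by
      rw [← hg3]; exact le_trans hg1 hg2
    have t2 : ∫ x in sᶜ, ‖φ x‖ ^ m ≤ B₀ * A / ρ ^ m₀ / Real.sqrt m := by
      rw [hdivEq]; exact ht2
    linarith
  calc ∫ x : ℝ, ‖φ x‖ ^ m ≤ (Real.sqrt (π / c) + B₀ * A / ρ ^ m₀) / Real.sqrt m := hfin
    _ < (Real.sqrt (π / c) + B₀ * A / ρ ^ m₀ + 1) / Real.sqrt m := by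
      rw [div_lt_div_iff_of_pos_right hsq]
      linarith
end
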